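/- arXiv:2006.07517 — 12 statements merged into one kernel-verified Lean document; each statement's English description precedes it below -/
import Mathlib

section
/- Let f : ℝ → ℝ be continuous, and suppose there exists a set A ⊆ ℝ with Lebesgue measure zero such that the image f(A) has positive Lebesgue outer measure. Then there exists a compact set K ⊆ ℝ with Lebesgue measure zero such that f(K) has positive Lebesgue measure. -/
open MeasureTheory Set ENNReal

/-!
Enlarge `A` to a null `G_δ` set `G = ⋂ n, V n` with `V n` open. Outer measure is continuous along
increasing unions of arbitrary sets, and each open `V n` is an increasing union of compact sets, so
one can choose compact sets `D 0 ⊇ D 1 ⊇ ⋯` with `D n ⊆ V n` while keeping `λ*(f '' (G ∩ D n)) > c`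
for a fixed `0 < c < λ*(f '' G)`. Then `K = ⋂ n, D n` is a compact subset of `G`, and by compactness
`f '' K = ⋂ n, f '' D n`, a decreasing intersection of compact sets each of measure at least `c`.
-/

variable {X Y : Type*}

theorem MeasureTheory.Measure.exists_isGδ_superset_measure_eq_zero [TopologicalSpace X]
    [MeasurableSpace X] (μ : Measure X) [μ.OuterRegular] {A : Set X} (hA : μ A = 0) :
    ∃ G, A ⊆ G ∧ IsGδ G ∧ μ G = 0 := by
  have hU : ∀ n : ℕ, ∃ U ⊇ A, IsOpen U ∧ μ U < (n : ℝ≥0∞)⁻¹ := fun n =>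
    A.exists_isOpen_lt_of_lt _ (hA ▸ ENNReal.inv_pos.2 (natCast_ne_top n))
  choose U hAU hUo hUμ using hU
  refine ⟨⋂ n, U n, subset_iInter hAU, .iInter_of_isOpen hUo, le_antisymm ?_ zero_le⟩
  exact ge_of_tendsto' ENNReal.tendsto_inv_nat_nhds_zero fun n =>
    (measure_mono (iInter_subset U n)).trans (hUμ n).le

theorem IsOpen.exists_monotone_isCompact_iUnion_eq [PseudoEMetricSpace X] [SigmaCompactSpace X]
    {U : Set X} (hU : IsOpen U) :
    ∃ K : ℕ → Set X, (∀ n, IsCompact (K n)) ∧ (∀ n, K n ⊆ U) ∧ ⋃ n, K n = U ∧ Monotone K := by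
  obtain ⟨F, hFc, hFU, hFU_eq, hFmono⟩ := hU.exists_iUnion_isClosed
  refine ⟨fun n => F n ∩ compactCovering X n,
    fun n => (isCompact_compactCovering X n).inter_left (hFc n),
    fun n => inter_subset_left.trans (hFU n), ?_,
    fun m n h => inter_subset_inter (hFmono h) (compactCovering_subset X h)⟩
  rw [iUnion_inter_of_monotone hFmono (compactCovering_subset X), hFU_eq, iUnion_compactCovering,
    inter_univ]

theorem exists_isCompact_subset_lt_measure_image_inter [PseudoEMetricSpace X]
    [SigmaCompactSpace X] [MeasurableSpace Y] (ν : Measure Y) (f : X → Y) {S V : Set X}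
    (hV : IsOpen V) (hSV : S ⊆ V) {c : ℝ≥0∞} (hc : c < ν (f '' S)) :
    ∃ C ⊆ V, IsCompact C ∧ c < ν (f '' (S ∩ C)) := by
  obtain ⟨K, hKc, hKV, hKU, hKmono⟩ := hV.exists_monotone_isCompact_iUnion_eq
  have hS : S = ⋃ n, S ∩ K n := by rw [← inter_iUnion, hKU, inter_eq_left.2 hSV]
  rw [hS, image_iUnion, Monotone.measure_iUnion fun m n h =>
    image_mono (inter_subset_inter_right S (hKmono h))] at hc
  obtain ⟨n, hn⟩ := lt_iSup_iff.1 hc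
  exact ⟨K n, hKV n, hKc n, hn⟩

theorem exists_antitone_isCompact_lt_measure_image [EMetricSpace X] [SigmaCompactSpace X]
    [MeasurableSpace Y] (ν : Measure Y) (f : X → Y) {V : ℕ → Set X} (hV : ∀ n, IsOpen (V n))
    {c : ℝ≥0∞} (hc : c < ν (f '' ⋂ n, V n)) :
    ∃ D : ℕ → Set X, Antitone D ∧ (∀ n, IsCompact (D n)) ∧ (∀ n, D n ⊆ V n) ∧
      ∀ n, c < ν (f '' D n) := by
  set G := ⋂ n, V n
  have step : ∀ n (E : Set X), IsClosed E ∧ c < ν (f '' (G ∩ E)) →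
      ∃ E' ⊆ E ∩ V n, IsCompact E' ∧ c < ν (f '' (G ∩ E')) := by
    rintro n E ⟨hEc, hE⟩
    obtain ⟨C, hCV, hCc, hC⟩ := exists_isCompact_subset_lt_measure_image_inter ν f (hV n)
      (inter_subset_left.trans (iInter_subset V n)) hE
    exact ⟨E ∩ C, inter_subset_inter_right E hCV, hCc.inter_left hEc, by rwa [← inter_assoc]⟩
  choose! next hnext_sub hnext_compact hnext_lt using step
  let E : ℕ → Set X := fun n => Nat.rec univ next n
  have hE : ∀ n, IsClosed (E n) ∧ c < ν (f '' (G ∩ E n)) := by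
    intro n
    induction n with
    | zero => exact ⟨isClosed_univ, by simpa [E] using hc⟩
    | succ n ih => exact ⟨(hnext_compact n _ ih).isClosed, hnext_lt n _ ih⟩
  refine ⟨fun n => E (n + 1),
    antitone_nat_of_succ_le fun n => (hnext_sub _ _ (hE (n + 1))).trans inter_subset_left,
    fun n => hnext_compact n _ (hE n), fun n => (hnext_sub n _ (hE n)).trans inter_subset_right,
    fun n => (hnext_lt n _ (hE n)).trans_le (measure_mono (image_mono inter_subset_right))⟩

theorem Antitone.image_iInter_of_isCompact [TopologicalSpace X] [T2Space X] [TopologicalSpace Y]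
    [T1Space Y] {f : X → Y} (hf : Continuous f) {D : ℕ → Set X} (hD : Antitone D)
    (hDc : ∀ n, IsCompact (D n)) : f '' ⋂ n, D n = ⋂ n, f '' D n := by
  refine (image_iInter_subset D f).antisymm fun y hy => ?_
  have hfiber_closed : ∀ n, IsClosed (D n ∩ f ⁻¹' {y}) := fun n =>
    (hDc n).isClosed.inter (isClosed_singleton.preimage hf)
  have hfiber_nonempty : ∀ n, (D n ∩ f ⁻¹' {y}).Nonempty := fun n =>
    let ⟨x, hx, hfx⟩ := mem_iInter.1 hy n
    ⟨x, hx, hfx⟩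
  obtain ⟨x, hx⟩ := IsCompact.nonempty_iInter_of_sequence_nonempty_isCompact_isClosed _
    (fun n => inter_subset_inter_left _ (hD n.le_succ)) hfiber_nonempty
    ((hDc 0).inter_right (isClosed_singleton.preimage hf)) hfiber_closed
  exact ⟨x, mem_iInter.2 fun n => (mem_iInter.1 hx n).1, (mem_iInter.1 hx 0).2⟩

theorem IsGδ.exists_isCompact_subset_le_measure_image [EMetricSpace X] [SigmaCompactSpace X]
    [TopologicalSpace Y] [T2Space Y] [MeasurableSpace Y] [OpensMeasurableSpace Y] (ν : Measure Y)
    [IsFiniteMeasureOnCompacts ν] {f : X → Y} (hf : Continuous f) {G : Set X} (hG : IsGδ G)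
    {c : ℝ≥0∞} (hc : c < ν (f '' G)) : ∃ K ⊆ G, IsCompact K ∧ c ≤ ν (f '' K) := by
  obtain ⟨V, hVo, rfl⟩ := hG.eq_iInter_nat
  obtain ⟨D, hD, hDc, hDV, hDν⟩ := exists_antitone_isCompact_lt_measure_image ν f hVo hc
  have hK : IsCompact (⋂ n, D n) := (hDc 0).of_isClosed_subset
    (isClosed_iInter fun n => (hDc n).isClosed) (iInter_subset D 0)
  refine ⟨⋂ n, D n, iInter_mono hDV, hK, ?_⟩
  rw [hD.image_iInter_of_isCompact hf hDc, Antitone.measure_iInter (fun m n h => image_mono (hD h))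
    (fun n => ((hDc n).image hf).isClosed.measurableSet.nullMeasurableSet)
    ⟨0, ((hDc 0).image hf).measure_lt_top.ne⟩]
  exact le_iInf fun n => (hDν n).le

theorem stmt_0 (f : ℝ → ℝ) (hf : Continuous f)
    (A : Set ℝ) (hA : volume A = 0) (hfA : 0 < volume (f '' A)) :
    ∃ K : Set ℝ, IsCompact K ∧ volume K = 0 ∧ 0 < volume (f '' K) := by
  obtain ⟨G, hAG, hG, hG0⟩ := volume.exists_isGδ_superset_measure_eq_zero hA
  obtain ⟨c, hc0, hcG⟩ := exists_between (hfA.trans_le (measure_mono (image_mono hAG)))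
  obtain ⟨K, hKG, hK, hcK⟩ := hG.exists_isCompact_subset_le_measure_image volume hf hcG
  exact ⟨K, hK, measure_mono_null hKG hG0, hc0.trans_le hcK⟩
end

section
/- Let f : ℝ → ℝ be continuous and satisfy Luzin's property (N). Then for Lebesgue-almost every y ∈ ℝ, the fiber f⁻¹({y}) is countable; that is, the set {y ∈ ℝ : f⁻¹({y}) is uncountable} has Lebesgue measure zero. -/
/-!
If the set of values with uncountable fibre had positive measure, we could build a compact null
set whose image still has positive measure, contradicting (N). If the fibre of `y` is uncountable
inside a dyadic interval, then it is uncountable inside at least `R` of its dyadic subintervals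
once these are fine enough: take `R` condensation points of the fibre. Among `N` such subintervals,
a greedily chosen half still has `y` in the image of one of them, for all such `y` but a set of
relative measure `2 / R`. Iterating, the total length of the kept intervals halves at each stage
while the measure lost is summable, and by compactness the image of the limit compact set contains
every value that survives all stages.
-/

open MeasureTheory Set Filter Topology
open scoped ENNReal Finset

noncomputable section

theorem countable_setOf_exists_nhds_inter_countable {X : Type*} [TopologicalSpace X]
    [SecondCountableTopology X] (C : Set X) :
    {x ∈ C | ∃ U ∈ 𝓝 x, (C ∩ U).Countable}.Countable := by
  let b := TopologicalSpace.countableBasis X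
  refine (((TopologicalSpace.countable_countableBasis X).mono (sep_subset b _)).biUnion
    fun u (hu : u ∈ b ∧ (C ∩ u).Countable) => hu.2).mono ?_
  rintro x ⟨hxC, U, hU, hCU⟩
  obtain ⟨u, hub, hxu, huU⟩ := (TopologicalSpace.isBasis_countableBasis X).mem_nhds_iff.mp hU
  exact mem_biUnion ⟨hub, hCU.mono (inter_subset_inter_right C huU)⟩ ⟨hxC, hxu⟩

theorem infinite_setOf_irrational_condensation {C : Set ℝ} (hC : ¬C.Countable) :
    {x ∈ C | Irrational x ∧ ∀ U ∈ 𝓝 x, ¬(C ∩ U).Countable}.Infinite := by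
  refine fun hfin => hC (((hfin.countable.union
    (countable_setOf_exists_nhds_inter_countable C)).union
      (countable_range ((↑) : ℚ → ℝ))).mono fun x hx => ?_)
  by_cases hirr : Irrational x
  · by_cases hcond : ∀ U ∈ 𝓝 x, ¬(C ∩ U).Countable
    · exact Or.inl (Or.inl ⟨hx, hirr, hcond⟩)
    · push Not at hcond
      exact Or.inl (Or.inr ⟨hx, hcond⟩)
  · exact Or.inr (not_not.mp hirr)

theorem iInter_image_subset_image_iInter {X Y : Type*} [TopologicalSpace X] [T2Space X]
    [TopologicalSpace Y] [T1Space Y] {f : X → Y} (hf : Continuous f) {K : ℕ → Set X}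
    (hK : ∀ n, IsCompact (K n)) (hKsucc : ∀ n, K (n + 1) ⊆ K n) :
    ⋂ n, f '' K n ⊆ f '' ⋂ n, K n := by
  intro y hy
  have hfiber : (⋂ n, f ⁻¹' {y} ∩ K n).Nonempty := by
    refine IsCompact.nonempty_iInter_of_sequence_nonempty_isCompact_isClosed _
      (fun n => inter_subset_inter_right _ (hKsucc n)) (fun n => ?_)
      ((hK 0).inter_left (isClosed_singleton.preimage hf))
      (fun n => (isClosed_singleton.preimage hf).inter (hK n).isClosed)
    obtain ⟨x, hx, rfl⟩ := mem_iInter.mp hy n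
    exact ⟨x, rfl, hx⟩
  obtain ⟨x, hx⟩ := hfiber
  simp only [mem_iInter, mem_inter_iff, mem_preimage, mem_singleton_iff] at hx
  exact ⟨x, mem_iInter.mpr fun n => (hx n).2, (hx 0).1⟩

theorem measure_le_measure_iInter_add_tsum_diff {α : Type*} [MeasurableSpace α]
    (μ : Measure α) (A : ℕ → Set α) :
    μ (A 0) ≤ μ (⋂ n, A n) + ∑' n, μ (A n \ A (n + 1)) := by
  have hdiff : A 0 \ ⋂ n, A n ⊆ ⋃ n, A n \ A (n + 1) := by
    intro y ⟨hy0, hy⟩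
    by_contra hstay
    simp only [mem_iUnion, Set.mem_sdiff, not_exists, not_and, not_not] at hstay
    exact hy (mem_iInter.mpr fun n => Nat.rec hy0 (fun n hn => hstay n hn) n)
  calc μ (A 0) ≤ μ (A 0 ∩ ⋂ n, A n) + μ (A 0 \ ⋂ n, A n) := measure_le_inter_add_sdiff μ _ _
    _ ≤ μ (⋂ n, A n) + ∑' n, μ (A n \ A (n + 1)) :=
      add_le_add (measure_mono inter_subset_right)
        ((measure_mono hdiff).trans (measure_iUnion_le _))

theorem exists_seq_of_forall_exists_succ {β : Type*} {P : ℕ → β → Prop}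
    {Q : ℕ → β → β → Prop} {b₀ : β} (h₀ : P 0 b₀)
    (h : ∀ k b, P k b → ∃ b', P (k + 1) b' ∧ Q k b b') :
    ∃ s : ℕ → β, s 0 = b₀ ∧ ∀ k, P k (s k) ∧ Q k (s k) (s (k + 1)) := by
  choose! next hnext using h
  let s : ℕ → β := fun k => Nat.rec b₀ next k
  have hs : ∀ k, P k (s k) := fun k => Nat.rec h₀ (fun k hk => (hnext k _ hk).1) k
  exact ⟨s, rfl, fun k => ⟨hs k, (hnext k _ (hs k)).2⟩⟩

section Covering

variable {α ι : Type*}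

def coverCount (U : Finset ι) (B : ι → Set α) (y : α) : ℝ≥0∞ :=
  ∑ i ∈ U, (B i).indicator 1 y

theorem coverCount_eq_card (U : Finset ι) (B : ι → Set α) (y : α) [DecidablePred (y ∈ B ·)] :
    coverCount U B y = #{i ∈ U | y ∈ B i} := by
  simp only [coverCount, indicator_apply, Pi.one_apply, Finset.sum_boole]

theorem coverCount_mono {U V : Finset ι} (h : U ⊆ V) (B : ι → Set α) (y : α) :
    coverCount U B y ≤ coverCount V B y :=
  Finset.sum_le_sum_of_subset h

variable [MeasurableSpace α] {μ : Measure α} {B : ι → Set α}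

theorem measurable_coverCount (U : Finset ι) (hB : ∀ i, MeasurableSet (B i)) :
    Measurable (coverCount U B) :=
  Finset.measurable_sum _ fun i _ => measurable_one.indicator (hB i)

theorem exists_mul_measure_le_card_mul_measure_inter {U : Finset ι} (hU : U.Nonempty)
    (hB : ∀ i, MeasurableSet (B i)) {D : Set α} {R : ℕ}
    (hR : ∀ y ∈ D, (R : ℝ≥0∞) ≤ coverCount U B y) :
    ∃ i ∈ U, R * μ D ≤ #U * μ (D ∩ B i) := by
  obtain ⟨i, hi, hmax⟩ := U.exists_max_image (fun i => μ (D ∩ B i)) hU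
  refine ⟨i, hi, ?_⟩
  calc R * μ D = ∫⁻ _ in D, (R : ℝ≥0∞) ∂μ := (setLIntegral_const D _).symm
    _ ≤ ∫⁻ y in D, coverCount U B y ∂μ := setLIntegral_mono (measurable_coverCount U hB) hR
    _ = ∑ j ∈ U, μ (D ∩ B j) := by
      unfold coverCount
      rw [lintegral_finsetSum _ fun j _ => measurable_one.indicator (hB j)]
      simp only [lintegral_indicator_one (hB _), Measure.restrict_apply (hB _), inter_comm]
    _ ≤ #U * μ (D ∩ B i) := by
      simpa only [nsmul_eq_mul] using Finset.sum_le_card_nsmul U _ _ hmax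

/-- Greedy choice: adding the set that covers the largest part of `D = C \ ⋃ i ∈ T, B i` removes
at least the fraction `R / #U` of `D`, which propagates to the weight `#U + t * R`. -/
theorem exists_card_le_measure_diff_le [DecidableEq ι] (U : Finset ι)
    (hB : ∀ i, MeasurableSet (B i)) {C : Set α} {R : ℕ}
    (hR : ∀ y ∈ C, (R : ℝ≥0∞) ≤ coverCount U B y) (t : ℕ) :
    ∃ T ⊆ U, #T ≤ t ∧ (#U + t * R) * μ (C \ ⋃ i ∈ T, B i) ≤ #U * μ C := by
  obtain rfl | hU := U.eq_empty_or_nonempty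
  · refine ⟨∅, subset_rfl, by simp, ?_⟩
    obtain rfl | ⟨y, hy⟩ := C.eq_empty_or_nonempty
    · simp
    · have : R = 0 := by simpa [coverCount] using hR y hy
      simp [this]
  induction t with
  | zero => exact ⟨∅, Finset.empty_subset U, le_rfl, by simp⟩
  | succ t ih =>
    obtain ⟨T, hTU, hT, hmeas⟩ := ih
    set D := C \ ⋃ i ∈ T, B i
    obtain ⟨i, hi, hiD⟩ := exists_mul_measure_le_card_mul_measure_inter (μ := μ) hU hB
      (D := D) fun y hy => hR y hy.1
    refine ⟨insert i T, Finset.insert_subset hi hTU,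
      (Finset.card_insert_le _ _).trans (Nat.succ_le_succ hT), ?_⟩
    rw [Finset.set_biUnion_insert, union_comm, ← sdiff_sdiff]
    have hsplit : #U * μ (D \ B i) + R * μ D ≤ #U * μ D := by
      calc #U * μ (D \ B i) + R * μ D ≤ #U * μ (D \ B i) + #U * μ (D ∩ B i) := by gcongr
        _ = #U * μ D := by rw [← mul_add, add_comm, measure_inter_add_sdiff D (hB i)]
    calc (#U + ↑(t + 1) * R) * μ (D \ B i)
        = #U * μ (D \ B i) + R * μ (D \ B i) + t * R * μ (D \ B i) := by push_cast; ring
      _ ≤ #U * μ (D \ B i) + R * μ D + t * R * μ D := by gcongr <;> exact sdiff_subset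
      _ ≤ #U * μ D + t * R * μ D := add_le_add_left hsplit _
      _ = (#U + t * R) * μ D := by ring
      _ ≤ #U * μ C := hmeas

theorem exists_card_le_mul_measure_diff_le [DecidableEq ι] {U : Finset ι}
    (hB : ∀ i, MeasurableSet (B i)) {C : Set α} {R : ℕ}
    (hR : ∀ y ∈ C, (R : ℝ≥0∞) ≤ coverCount U B y) {t : ℕ} (ht : t ≠ 0) (hU : #U ≤ 2 * t) :
    ∃ T ⊆ U, #T ≤ t ∧ R * μ (C \ ⋃ i ∈ T, B i) ≤ 2 * μ C := by
  obtain ⟨T, hTU, hT, hTC⟩ := exists_card_le_measure_diff_le (μ := μ) U hB hR t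
  refine ⟨T, hTU, hT, (ENNReal.mul_le_mul_iff_right (Nat.cast_ne_zero.mpr ht)
    (ENNReal.natCast_ne_top t)).mp ?_⟩
  calc (t : ℝ≥0∞) * (R * μ (C \ ⋃ i ∈ T, B i)) ≤ (#U + t * R) * μ (C \ ⋃ i ∈ T, B i) := by
        rw [← mul_assoc]
        gcongr
        exact le_add_self
    _ ≤ #U * μ C := hTC
    _ ≤ (2 * t : ℕ) * μ C := by gcongr
    _ = t * (2 * μ C) := by push_cast; ring

end Covering

section Dyadic

def dyadicIoo (n : ℕ) (j : ℤ) : Set ℝ := Ioo (j / 2 ^ n) ((j + 1) / 2 ^ n)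

def dyadicIcc (n : ℕ) (j : ℤ) : Set ℝ := Icc (j / 2 ^ n) ((j + 1) / 2 ^ n)

/-- The indices of the dyadic intervals of level `n + d` inside the one of index `j` and level
`n`. -/
def descendants (j : ℤ) (d : ℕ) : Finset ℤ := Finset.Ico (j * 2 ^ d) ((j + 1) * 2 ^ d)

variable {n d : ℕ} {i j : ℤ} {x : ℝ}

theorem mem_dyadicIoo_iff : x ∈ dyadicIoo n j ↔ (j : ℝ) < 2 ^ n * x ∧ 2 ^ n * x < j + 1 := by
  simp only [dyadicIoo, mem_Ioo, div_lt_iff₀' (by positivity : (0 : ℝ) < 2 ^ n),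
    lt_div_iff₀' (by positivity : (0 : ℝ) < 2 ^ n)]

theorem card_descendants (j : ℤ) (d : ℕ) : #(descendants j d) = 2 ^ d := by
  rw [descendants, Int.card_Ico,
    show (j + 1) * 2 ^ d - j * 2 ^ d = ((2 ^ d : ℕ) : ℤ) by push_cast; ring, Int.toNat_natCast]

theorem dyadicIcc_subset_of_mem_descendants (h : i ∈ descendants j d) :
    dyadicIcc (n + d) i ⊆ dyadicIcc n j := by
  obtain ⟨hlo, hhi⟩ := Finset.mem_Ico.mp h
  have hlo' : (j : ℝ) * 2 ^ d ≤ i := by exact_mod_cast hlo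
  have hhi' : (i : ℝ) + 1 ≤ (j + 1) * 2 ^ d := by exact_mod_cast hhi
  apply Icc_subset_Icc
  · rw [pow_add, mul_comm, ← div_div]
    gcongr
    rwa [le_div_iff₀ (by positivity)]
  · rw [pow_add, mul_comm, ← div_div]
    gcongr
    rwa [div_le_iff₀ (by positivity)]

theorem floor_mem_descendants (hx : x ∈ dyadicIoo n j) (d : ℕ) :
    ⌊2 ^ (n + d) * x⌋ ∈ descendants j d := by
  obtain ⟨hlo, hhi⟩ := mem_dyadicIoo_iff.mp hx
  have h2 : (0 : ℝ) < 2 ^ d := by positivity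
  rw [descendants, Finset.mem_Ico, Int.le_floor, Int.floor_lt, pow_add,
    mul_comm ((2 : ℝ) ^ n), mul_assoc]
  push_cast
  constructor <;> nlinarith

theorem mem_dyadicIoo_floor (hx : Irrational x) (n : ℕ) : x ∈ dyadicIoo n ⌊2 ^ n * x⌋ := by
  have hirr : Irrational (2 ^ n * x) := by
    simpa using hx.natCast_mul (m := 2 ^ n) (by positivity)
  exact mem_dyadicIoo_iff.mpr
    ⟨(Int.floor_le _).lt_of_ne (hirr.ne_int _).symm, Int.lt_floor_add_one _⟩

theorem eventually_floor_ne {x' : ℝ} (h : x ≠ x') (n : ℕ) :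
    ∀ᶠ d in atTop, ⌊2 ^ (n + d) * x⌋ ≠ ⌊2 ^ (n + d) * x'⌋ := by
  have hpos : 0 < |x - x'| := abs_pos.mpr (sub_ne_zero.mpr h)
  have hpow : Tendsto (fun d : ℕ => (2 : ℝ) ^ (n + d)) atTop atTop :=
    tendsto_atTop_mono
      (fun d => pow_le_pow_right₀ (one_le_two : (1 : ℝ) ≤ 2) (Nat.le_add_left d n))
      (tendsto_pow_atTop_atTop_of_one_lt one_lt_two)
  filter_upwards [(hpow.atTop_mul_const hpos).eventually_gt_atTop 1] with d hd heq
  have := Int.abs_sub_lt_one_of_floor_eq_floor heq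
  rw [← mul_sub, abs_mul, abs_of_pos (by positivity)] at this
  linarith

theorem eventually_injOn_floor (Q : Finset ℝ) (n : ℕ) :
    ∀ᶠ d in atTop, InjOn (fun x : ℝ => ⌊2 ^ (n + d) * x⌋) Q := by
  have : ∀ x ∈ Q, ∀ x' ∈ Q, ∀ᶠ d in atTop, ⌊2 ^ (n + d) * x⌋ = ⌊2 ^ (n + d) * x'⌋ → x = x' :=
    fun x _ x' _ => by
      by_cases h : x = x'
      · exact Eventually.of_forall fun _ _ => h
      · exact (eventually_floor_ne h n).mono fun d hd heq => absurd heq hd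
  simp_rw [← Finset.eventually_all] at this
  exact this.mono fun d hd x hx x' hx' => hd x hx x' hx'

theorem isCompact_dyadicIcc (n : ℕ) (j : ℤ) : IsCompact (dyadicIcc n j) := isCompact_Icc

theorem volume_dyadicIcc (n : ℕ) (j : ℤ) : volume (dyadicIcc n j) = 2⁻¹ ^ n := by
  rw [dyadicIcc, Real.volume_Icc, ← sub_div, add_sub_cancel_left, one_div, ← inv_pow,
    ENNReal.ofReal_pow (by norm_num), ENNReal.ofReal_inv_of_pos (by norm_num)]
  simp

theorem volume_biUnion_dyadicIcc_le {S : Finset ℤ} {m k : ℕ} (h : #S * 2 ^ k ≤ 2 ^ m) :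
    volume (⋃ j ∈ S, dyadicIcc m j) ≤ 2⁻¹ ^ k := by
  have hcancel : ∀ l : ℕ, (2 : ℝ≥0∞) ^ l * 2⁻¹ ^ l = 1 := fun l => by
    rw [← mul_pow, ENNReal.mul_inv_cancel two_ne_zero ENNReal.ofNat_ne_top, one_pow]
  calc volume (⋃ j ∈ S, dyadicIcc m j) ≤ ∑ j ∈ S, volume (dyadicIcc m j) :=
        measure_biUnion_finset_le S _
    _ = (#S * 2 ^ k : ℕ) * 2⁻¹ ^ m * 2⁻¹ ^ k := by
        simp only [volume_dyadicIcc, Finset.sum_const, nsmul_eq_mul]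
        push_cast
        rw [mul_right_comm, mul_assoc _ (2 ^ k : ℝ≥0∞), hcancel, mul_one]
    _ ≤ (2 ^ m : ℕ) * 2⁻¹ ^ m * 2⁻¹ ^ k := by gcongr
    _ = 2⁻¹ ^ k := by push_cast; rw [hcancel, one_mul]

end Dyadic

namespace LuzinN

variable (f : ℝ → ℝ)

def uncountableValues (n : ℕ) (j : ℤ) : Set ℝ := {y | ¬(f ⁻¹' {y} ∩ dyadicIoo n j).Countable}

/- `uncountableValues f n j` need not be measurable, so the construction runs on measurable hulls;
the price is the null set `(goodValues f)ᶜ`, where a hull misses the counting property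
`uncountableValues_subset_manyHits`. -/
def hull (n : ℕ) (j : ℤ) : Set ℝ :=
  toMeasurable volume (uncountableValues f n j) ∩ f '' dyadicIcc n j

def manyHits (n : ℕ) (j : ℤ) : Set ℝ :=
  {y | ∀ R : ℕ, ∀ᶠ d in atTop, (R : ℝ≥0∞) ≤ coverCount (descendants j d) (hull f (n + d)) y}

def goodValues : Set ℝ := {y | ∀ n j, y ∈ hull f n j → y ∈ manyHits f n j}

variable {f}

theorem uncountableValues_subset_hull (n : ℕ) (j : ℤ) :
    uncountableValues f n j ⊆ hull f n j := by
  intro y hy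
  obtain ⟨x, hfx, hx⟩ : (f ⁻¹' {y} ∩ dyadicIoo n j).Nonempty :=
    nonempty_iff_ne_empty.mpr fun h => hy (h ▸ countable_empty)
  exact ⟨subset_toMeasurable _ _ hy, x, Ioo_subset_Icc_self hx, hfx⟩

theorem hull_subset_image (n : ℕ) (j : ℤ) : hull f n j ⊆ f '' dyadicIcc n j :=
  inter_subset_right

theorem measurableSet_hull (hf : Continuous f) (n : ℕ) (j : ℤ) : MeasurableSet (hull f n j) :=
  (measurableSet_toMeasurable _ _).inter
    ((isCompact_dyadicIcc n j).image hf).isClosed.measurableSet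

/-- An irrational condensation point `x` of the fibre lies inside the open dyadic interval of
index `⌊2 ^ (n + d) * x⌋` and level `n + d`, and `R` of them eventually lie in distinct ones. -/
theorem uncountableValues_subset_manyHits (n : ℕ) (j : ℤ) :
    uncountableValues f n j ⊆ manyHits f n j := by
  intro y hy R
  obtain ⟨Q, hQ, hQR⟩ := (infinite_setOf_irrational_condensation hy).exists_subset_card_eq R
  filter_upwards [eventually_injOn_floor Q n] with d hd
  classical
  rw [coverCount_eq_card, ← hQR, ← Finset.card_image_of_injOn hd, Nat.cast_le]
  refine Finset.card_le_card fun i hi => ?_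
  obtain ⟨x, hxQ, rfl⟩ := Finset.mem_image.mp hi
  obtain ⟨⟨-, hxI⟩, hirr, hcond⟩ := hQ hxQ
  refine Finset.mem_filter.mpr
    ⟨floor_mem_descendants hxI d, uncountableValues_subset_hull _ _ fun hcount => ?_⟩
  exact hcond _ (isOpen_Ioo.mem_nhds (mem_dyadicIoo_floor hirr _))
    (hcount.mono (inter_subset_inter_left _ inter_subset_left))

theorem measurableSet_manyHits (hf : Continuous f) (n : ℕ) (j : ℤ) :
    MeasurableSet (manyHits f n j) := by
  simp only [manyHits, eventually_atTop, ofPred_forall, ofPred_exists]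
  exact .iInter fun R => .iUnion fun D => .iInter fun d => .iInter fun _ =>
    measurableSet_le measurable_const (measurable_coverCount _ (measurableSet_hull hf _))

theorem measurableSet_goodValues (hf : Continuous f) : MeasurableSet (goodValues f) := by
  simp only [goodValues, ofPred_forall, imp_iff_not_or, ofPred_or]
  exact .iInter fun n => .iInter fun j =>
    (measurableSet_hull hf n j).compl.union (measurableSet_manyHits hf n j)

theorem volume_compl_goodValues (hf : Continuous f) : volume (goodValues f)ᶜ = 0 := by
  have hsub : (goodValues f)ᶜ ⊆
      ⋃ n, ⋃ j, toMeasurable volume (uncountableValues f n j) ∩ (manyHits f n j)ᶜ := by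
    intro y hy
    simp only [goodValues, mem_compl_iff, mem_ofPred_eq, not_forall] at hy
    obtain ⟨n, j, hyB, hyT⟩ := hy
    exact mem_iUnion₂.mpr ⟨n, j, hyB.1, hyT⟩
  refine measure_mono_null hsub (measure_iUnion_null fun n => measure_iUnion_null fun j => ?_)
  rw [Measure.measure_toMeasurable_inter_of_sFinite (measurableSet_manyHits hf n j).compl]
  exact measure_mono_null (fun y hy => hy.2 (uncountableValues_subset_manyHits n j hy.1))
    measure_empty

theorem exists_subset_forall_le_coverCount (hf : Continuous f) {n : ℕ} {S : Finset ℤ}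
    {A : Set ℝ} (hA : MeasurableSet A) (hAfin : volume A ≠ ∞) (hAgood : A ⊆ goodValues f)
    (hAS : A ⊆ ⋃ j ∈ S, hull f n j) (R : ℕ) {ε : ℝ≥0∞} (hε : ε ≠ 0) :
    ∃ D, ∃ C ⊆ A, MeasurableSet C ∧ volume (A \ C) ≤ ε ∧ ∀ d ≥ D, ∀ y ∈ C,
      (R : ℝ≥0∞) ≤ coverCount (S.biUnion (descendants · d)) (hull f (n + d)) y := by
  set C : ℕ → Set ℝ := fun D => A ∩ {y | ∀ d ≥ D,
    (R : ℝ≥0∞) ≤ coverCount (S.biUnion (descendants · d)) (hull f (n + d)) y}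
  have hC : ∀ D, MeasurableSet (C D) := fun D => hA.inter <| by
    simp only [ofPred_forall]
    exact .iInter fun d => .iInter fun _ =>
      measurableSet_le measurable_const (measurable_coverCount _ (measurableSet_hull hf _))
  have hexhaust : ⋂ D, A \ C D = ∅ := by
    refine eq_empty_of_forall_notMem fun y hy => ?_
    have hyA := (mem_iInter.mp hy 0).1
    obtain ⟨j, hjS, hyj⟩ := mem_iUnion₂.mp (hAS hyA)
    obtain ⟨D, hD⟩ := eventually_atTop.mp (hAgood hyA n j hyj R)
    exact (mem_iInter.mp hy D).2 ⟨hyA, fun d hd => (hD d hd).trans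
      (coverCount_mono (Finset.subset_biUnion_of_mem (descendants · d) hjS) _ _)⟩
  have hlim : Tendsto (fun D => volume (A \ C D)) atTop (𝓝 0) := by
    have := tendsto_measure_iInter_atTop (fun D => (hA.diff (hC D)).nullMeasurableSet)
      (fun D D' h => sdiff_subset_sdiff_right fun y hy => ⟨hy.1, fun d hd => hy.2 d (h.trans hd)⟩)
      ⟨0, measure_ne_top_of_subset sdiff_subset hAfin⟩
    rwa [hexhaust, measure_empty] at this
  obtain ⟨D, hD⟩ := (hlim.eventually (ge_mem_nhds (pos_iff_ne_zero.mpr hε))).exists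
  exact ⟨D, C D, inter_subset_left, hC D, hD, fun d hd y hy => hy.2 d hd⟩

theorem exists_refinement (hf : Continuous f) {n : ℕ} {S : Finset ℤ} {A : Set ℝ}
    (hA : MeasurableSet A) (hAfin : volume A ≠ ∞) (hAgood : A ⊆ goodValues f)
    (hAS : A ⊆ ⋃ j ∈ S, hull f n j) {ε : ℝ≥0∞} (hε : ε ≠ 0) :
    ∃ d : ℕ, ∃ S' : Finset ℤ, ∃ A' ⊆ A, MeasurableSet A' ∧ A' ⊆ ⋃ i ∈ S', hull f (n + d) i ∧
      (∀ i ∈ S', ∃ j ∈ S, i ∈ descendants j d) ∧ 2 * #S' ≤ #S * 2 ^ d ∧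
      volume (A \ A') ≤ ε := by
  obtain rfl | hS := S.eq_empty_or_nonempty
  · obtain rfl : A = ∅ := subset_empty_iff.mp (by simpa using hAS)
    exact ⟨0, ∅, ∅, subset_rfl, .empty, by simp, by simp, by simp, by simp⟩
  have hε2 : ε / 2 ≠ 0 := (ENNReal.half_pos hε).ne'
  obtain ⟨R, hR⟩ := ENNReal.exists_nat_mul_gt hε2 (b := 2 * volume A)
    (ENNReal.mul_ne_top (by simp) hAfin)
  obtain ⟨D, C, hCA, hC, hAC, hCR⟩ :=
    exists_subset_forall_le_coverCount hf hA hAfin hAgood hAS R hε2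
  set U := S.biUnion (descendants · (D + 1))
  have hU : #U ≤ 2 * (#S * 2 ^ D) := Finset.card_biUnion_le.trans_eq (by
    simp only [card_descendants, Finset.sum_const, smul_eq_mul, pow_succ]
    ring)
  obtain ⟨T, hTU, hT, hTC⟩ := exists_card_le_mul_measure_diff_le (μ := volume)
    (measurableSet_hull hf (n + (D + 1))) (hCR (D + 1) D.le_succ)
    (mul_ne_zero hS.card_pos.ne' (by positivity)) hU
  have hloss : volume (C \ ⋃ i ∈ T, hull f (n + (D + 1)) i) ≤ ε / 2 :=
    (lt_of_mul_lt_mul_left' ((hTC.trans (by gcongr)).trans_lt hR)).le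
  refine ⟨D + 1, T, C ∩ ⋃ i ∈ T, hull f (n + (D + 1)) i, inter_subset_left.trans hCA,
    hC.inter (Finset.measurableSet_biUnion T fun i _ => measurableSet_hull hf _ _),
    inter_subset_right, fun i hi => by simpa [U] using hTU hi, by rw [pow_succ]; lia, ?_⟩
  calc volume (A \ (C ∩ ⋃ i ∈ T, hull f (n + (D + 1)) i))
      ≤ volume ((A \ C) ∪ (C \ ⋃ i ∈ T, hull f (n + (D + 1)) i)) :=
        measure_mono fun y ⟨hyA, hy⟩ => by by_cases hyC : y ∈ C <;> simp_all
    _ ≤ ε / 2 + ε / 2 := (measure_union_le _ _).trans (add_le_add hAC hloss)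
    _ = ε := ENNReal.add_halves ε

structure Stage where
  level : ℕ
  cells : Finset ℤ
  values : Set ℝ

namespace Stage

def support (s : Stage) : Set ℝ := ⋃ j ∈ s.cells, dyadicIcc s.level j

def Admissible (f : ℝ → ℝ) (A₀ : Set ℝ) (k : ℕ) (s : Stage) : Prop :=
  MeasurableSet s.values ∧ s.values ⊆ A₀ ∧ s.values ⊆ ⋃ j ∈ s.cells, hull f s.level j ∧
    #s.cells * 2 ^ k ≤ 2 ^ s.level

theorem isCompact_support (s : Stage) : IsCompact s.support :=
  s.cells.finite_toSet.isCompact_biUnion fun j _ => isCompact_dyadicIcc _ j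

theorem Admissible.exists_succ (hf : Continuous f) {A₀ : Set ℝ} (hA₀ : A₀ ⊆ goodValues f)
    (hA₀fin : volume A₀ ≠ ∞) {k : ℕ} {s : Stage} (hs : s.Admissible f A₀ k) {ε : ℝ≥0∞}
    (hε : ε ≠ 0) :
    ∃ s' : Stage, s'.Admissible f A₀ (k + 1) ∧ s'.support ⊆ s.support ∧
      volume (s.values \ s'.values) ≤ ε := by
  obtain ⟨hA, hAA₀, hAS, hcard⟩ := hs
  obtain ⟨d, S', A', hA'A, hA', hA'S, hS'desc, hS'card, hloss⟩ := exists_refinement hf hA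
    (measure_ne_top_of_subset hAA₀ hA₀fin) (hAA₀.trans hA₀) hAS hε
  refine ⟨⟨s.level + d, S', A'⟩, ⟨hA', hA'A.trans hAA₀, hA'S, ?_⟩, fun x hx => ?_, hloss⟩
  · calc #S' * 2 ^ (k + 1) = 2 * #S' * 2 ^ k := by ring
      _ ≤ #s.cells * 2 ^ d * 2 ^ k := Nat.mul_le_mul_right _ hS'card
      _ ≤ 2 ^ s.level * 2 ^ d := by rw [mul_right_comm]; gcongr
      _ = 2 ^ (s.level + d) := (pow_add _ _ _).symm
  · obtain ⟨i, hi, hxi⟩ := mem_iUnion₂.mp hx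
    obtain ⟨j, hj, hij⟩ := hS'desc i hi
    exact mem_iUnion₂.mpr ⟨j, hj, dyadicIcc_subset_of_mem_descendants hij hxi⟩

end Stage

theorem exists_nested_compacts (hf : Continuous f) (n : ℕ) (j₀ : ℤ) {ε : ℕ → ℝ≥0∞}
    (hε : ∀ k, ε k ≠ 0) :
    ∃ K A : ℕ → Set ℝ, A 0 = hull f n j₀ ∩ goodValues f ∧ ∀ k, IsCompact (K k) ∧
      K (k + 1) ⊆ K k ∧ volume (K k) ≤ 2⁻¹ ^ k ∧ volume (A k \ A (k + 1)) ≤ ε k ∧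
      A k ⊆ f '' K k := by
  set A₀ := hull f n j₀ ∩ goodValues f
  have hA₀fin : volume A₀ ≠ ∞ := measure_ne_top_of_subset (inter_subset_left.trans
    (hull_subset_image n j₀)) ((isCompact_dyadicIcc n j₀).image hf).measure_ne_top
  have h₀ : Stage.Admissible f A₀ 0 ⟨n, {j₀}, A₀⟩ :=
    ⟨(measurableSet_hull hf n j₀).inter (measurableSet_goodValues hf), subset_rfl,
      fun y hy => by simpa using hy.1, by simpa using Nat.one_le_two_pow⟩
  obtain ⟨stage, h0, hstage⟩ := exists_seq_of_forall_exists_succ h₀ fun k s hs =>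
    hs.exists_succ hf inter_subset_right hA₀fin (hε k)
  refine ⟨fun k => (stage k).support, fun k => (stage k).values, by simp only [h0], fun k =>
    ⟨(stage k).isCompact_support, (hstage k).2.1, volume_biUnion_dyadicIcc_le (hstage k).1.2.2.2,
      (hstage k).2.2, (hstage k).1.2.2.1.trans ?_⟩⟩
  simp only [Stage.support, image_iUnion₂]
  exact iUnion₂_mono fun j _ => hull_subset_image _ j

theorem volume_hull_inter_goodValues (hf : Continuous f)
    (hN : ∀ A : Set ℝ, volume A = 0 → volume (f '' A) = 0) (n : ℕ) (j₀ : ℤ) :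
    volume (hull f n j₀ ∩ goodValues f) = 0 := by
  refine nonpos_iff_eq_zero.mp (ENNReal.le_of_forall_pos_le_add fun δ hδ _ => ?_)
  obtain ⟨ε, hε, hεδ⟩ :=
    ENNReal.exists_pos_sum_of_countable' (ENNReal.coe_ne_zero.mpr hδ.ne') ℕ
  obtain ⟨K, A, hA0, hKA⟩ := exists_nested_compacts hf n j₀ fun k => (hε k).ne'
  have hK : volume (⋂ k, K k) = 0 := nonpos_iff_eq_zero.mp <|
    ge_of_tendsto' (ENNReal.tendsto_pow_atTop_nhds_zero_of_lt_one (by norm_num))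
      fun k => (measure_mono (iInter_subset K k)).trans (hKA k).2.2.1
  have hA : volume (⋂ k, A k) = 0 := measure_mono_null
    ((iInter_mono fun k => (hKA k).2.2.2.2).trans
      (iInter_image_subset_image_iInter hf (fun k => (hKA k).1) fun k => (hKA k).2.1))
    (hN _ hK)
  calc volume (hull f n j₀ ∩ goodValues f)
      ≤ volume (⋂ k, A k) + ∑' k, volume (A k \ A (k + 1)) :=
        hA0 ▸ measure_le_measure_iInter_add_tsum_diff volume A
    _ ≤ 0 + δ := by
      rw [hA]
      gcongr
      exact (ENNReal.tsum_le_tsum fun k => (hKA k).2.2.2.1).trans hεδ.le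

theorem volume_uncountableValues (hf : Continuous f)
    (hN : ∀ A : Set ℝ, volume A = 0 → volume (f '' A) = 0) (n : ℕ) (j : ℤ) :
    volume (uncountableValues f n j) = 0 :=
  measure_mono_null ((uncountableValues_subset_hull n j).trans fun y hy =>
      (em (y ∈ goodValues f)).imp (fun hy' => ⟨hy, hy'⟩) id)
    (measure_union_null (volume_hull_inter_goodValues hf hN n j) (volume_compl_goodValues hf))

theorem setOf_not_countable_subset_iUnion (f : ℝ → ℝ) :
    {y : ℝ | ¬(f ⁻¹' {y}).Countable} ⊆ ⋃ j : ℤ, uncountableValues f 0 j := by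
  intro y hy
  by_contra hcount
  simp only [mem_iUnion, uncountableValues, mem_ofPred_eq, not_exists, not_not] at hcount
  refine hy (((countable_iUnion hcount).union (countable_range ((↑) : ℚ → ℝ))).mono
    fun x hx => ?_)
  by_cases hirr : Irrational x
  · exact Or.inl (mem_iUnion.mpr ⟨_, hx, by simpa using mem_dyadicIoo_floor hirr 0⟩)
  · exact Or.inr (not_not.mp hirr)

end LuzinN

end

theorem stmt_1 (f : ℝ → ℝ) (hf : Continuous f)
    (hN : ∀ A : Set ℝ, volume A = 0 → volume (f '' A) = 0) :
    volume {y : ℝ | ¬ (f ⁻¹' {y}).Countable} = 0 :=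
  measure_mono_null (LuzinN.setOf_not_countable_subset_iUnion f)
    (measure_iUnion_null fun j => LuzinN.volume_uncountableValues hf hN 0 j)
end

section
/- Let A ⊆ ℝ be an analytic set with positive Lebesgue measure, and let f : ℝ → ℝ be a continuous function such that for every subset B ⊆ A with Lebesgue measure zero, the image f(B) is countable. Then the image f(A) is countable. -/
/-!
An analytic set `A = g(ℕ^ℕ)` is capacitable: choosing bounds `b` one coordinate at a time, so
that the images of the boxes `{x | ∀ i < k, x i ≤ b i}` keep outer measure above `c`, the closures
of these images decrease to the compact set `g(∏ Iic (b i)) ⊆ A`, which therefore has measure at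
least `c`. So `A` is a σ-compact set up to a null set, and the null part has countable image.

For a compact `K ⊆ A` with `f(K)` uncountable, `f(K)` contains a Cantor set and hence continuum
many disjoint uncountable compact sets `E t`. The disjoint measurable sets `K ∩ f⁻¹(E t)` cannot
all have positive measure, and a null one has the uncountable image `E t`.
-/

open MeasureTheory Set Filter Topology Function
open scoped ENNReal

def boundedPrefix (b : ℕ → ℕ) (k : ℕ) : Set (ℕ → ℕ) := {x | ∀ i < k, x i ≤ b i}

theorem boundedPrefix_zero (b : ℕ → ℕ) : boundedPrefix b 0 = univ := by
  simp [boundedPrefix]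

theorem boundedPrefix_antitone (b : ℕ → ℕ) : Antitone (boundedPrefix b) :=
  fun _ _ hkl _ hx i hi => hx i (hi.trans_le hkl)

theorem boundedPrefix_congr {b b' : ℕ → ℕ} {k : ℕ} (h : ∀ i < k, b i = b' i) :
    boundedPrefix b k = boundedPrefix b' k := by
  ext x
  exact forall₂_congr fun i hi => by rw [h i hi]

theorem boundedPrefix_update_succ (b : ℕ → ℕ) (k n : ℕ) :
    boundedPrefix (update b k n) (k + 1) = boundedPrefix b k ∩ {x | x k ≤ n} := by
  ext x
  simp only [boundedPrefix, mem_ofPred_eq, mem_inter_iff, Nat.lt_succ_iff_lt_or_eq, or_imp,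
    forall_and, forall_eq, update_self]
  exact and_congr_left' (forall₂_congr fun i hi => by rw [update_of_ne hi.ne])

theorem exists_lt_measure_image_inter_le {α : Type*} [MeasurableSpace α] (μ : Measure α)
    (g : (ℕ → ℕ) → α) (T : Set (ℕ → ℕ)) (k : ℕ) {c : ℝ≥0∞} (hc : c < μ (g '' T)) :
    ∃ n, c < μ (g '' (T ∩ {x | x k ≤ n})) := by
  have hT : g '' T = ⋃ n, g '' (T ∩ {x | x k ≤ n}) := by
    rw [← image_iUnion, ← inter_iUnion, iUnion_eq_univ_iff.2 fun x => ⟨x k, le_refl (x k)⟩,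
      inter_univ]
  have hmono : Monotone fun n => g '' (T ∩ {x | x k ≤ n}) :=
    fun _ _ hmn => image_mono (inter_subset_inter_right _ fun _ hx => le_trans hx hmn)
  rw [hT, hmono.measure_iUnion] at hc
  exact lt_iSup_iff.1 hc

theorem exists_forall_lt_measure_image_boundedPrefix {α : Type*} [MeasurableSpace α]
    (μ : Measure α) (g : (ℕ → ℕ) → α) {c : ℝ≥0∞} (hc : c < μ (range g)) :
    ∃ b, ∀ k, c < μ (g '' boundedPrefix b k) := by
  have step : ∀ k b, ∃ n, c < μ (g '' boundedPrefix b k) →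
      c < μ (g '' boundedPrefix (update b k n) (k + 1)) := by
    intro k b
    by_cases h : c < μ (g '' boundedPrefix b k)
    · obtain ⟨n, hn⟩ := exists_lt_measure_image_inter_le μ g _ k h
      exact ⟨n, fun _ => by rwa [boundedPrefix_update_succ]⟩
    · exact ⟨0, fun h' => absurd h' h⟩
  choose next hnext using step
  let β : ℕ → ℕ → ℕ := fun k => Nat.rec (fun _ => 0) (fun k b => update b k (next k b)) k
  have hβ : ∀ k, c < μ (g '' boundedPrefix (β k) k) := by
    intro k
    induction k with
    | zero => simpa [β, boundedPrefix_zero] using hc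
    | succ k ih => exact hnext k (β k) ih
  have hagree : ∀ k, ∀ i < k, β k i = β (i + 1) i := by
    intro k
    induction k with
    | zero => intro i hi; omega
    | succ k ih =>
      intro i hi
      rcases Nat.lt_succ_iff_lt_or_eq.1 hi with hik | rfl
      · exact (update_of_ne hik.ne _ _).trans (ih i hik)
      · rfl
  exact ⟨fun i => β (i + 1) i, fun k => boundedPrefix_congr (hagree k) ▸ hβ k⟩

theorem isCompact_pi_Iic (b : ℕ → ℕ) : IsCompact (univ.pi fun i => Iic (b i)) :=
  isCompact_univ_pi fun i => (finite_Iic (b i)).isCompact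

theorem exists_tendsto_subseq_of_mem_boundedPrefix {b : ℕ → ℕ} {y : ℕ → ℕ → ℕ}
    (hy : ∀ k, y k ∈ boundedPrefix b k) :
    ∃ a ∈ univ.pi (fun i => Iic (b i)), ∃ φ : ℕ → ℕ,
      StrictMono φ ∧ Tendsto (y ∘ φ) atTop (𝓝 a) := by
  -- clipping `y k` to the box leaves its coordinates below `k` unchanged
  obtain ⟨a, ha, φ, hφ, hlim⟩ := (isCompact_pi_Iic b).tendsto_subseq
    (x := fun k i => min (y k i) (b i)) fun k => mem_univ_pi.2 fun i => mem_Iic.2 (min_le_right _ _)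
  refine ⟨a, ha, φ, hφ, tendsto_pi_nhds.2 fun i => (tendsto_pi_nhds.1 hlim i).congr' ?_⟩
  filter_upwards [eventually_gt_atTop i] with n hn
  exact min_eq_left (hy (φ n) i (hn.trans_le hφ.le_apply))

theorem iInter_closure_image_boundedPrefix_subset {X : Type*} [MetricSpace X]
    {g : (ℕ → ℕ) → X} (hg : Continuous g) (b : ℕ → ℕ) :
    ⋂ k, closure (g '' boundedPrefix b k) ⊆ g '' univ.pi fun i => Iic (b i) := by
  intro x hx
  have hz : ∀ k : ℕ, ∃ z ∈ boundedPrefix b k, dist (g z) x < 1 / (k + 1) := fun k => by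
    obtain ⟨_, ⟨z, hz, rfl⟩, hd⟩ :=
      Metric.mem_closure_iff.1 (mem_iInter.1 hx k) _ Nat.one_div_pos_of_nat
    exact ⟨z, hz, by rwa [dist_comm]⟩
  choose z hz hdist using hz
  obtain ⟨a, ha, φ, hφ, hlim⟩ := exists_tendsto_subseq_of_mem_boundedPrefix hz
  have hgz : Tendsto (fun k => g (z k)) atTop (𝓝 x) :=
    tendsto_iff_dist_tendsto_zero.2 (squeeze_zero (fun _ => dist_nonneg) (fun k => (hdist k).le)
      tendsto_one_div_add_atTop_nhds_zero_nat)
  exact ⟨a, ha, tendsto_nhds_unique ((hg.tendsto a).comp hlim) (hgz.comp hφ.tendsto_atTop)⟩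

namespace MeasureTheory.AnalyticSet

variable {X : Type*} [MetricSpace X] [MeasurableSpace X] [OpensMeasurableSpace X]
  (μ : Measure X) {A : Set X}

theorem exists_isCompact_subset_le_measure [IsFiniteMeasure μ] (hA : AnalyticSet A)
    {c : ℝ≥0∞} (hc : c < μ A) : ∃ K ⊆ A, IsCompact K ∧ c ≤ μ K := by
  rw [AnalyticSet] at hA
  rcases hA with rfl | ⟨g, hg, rfl⟩
  · simp at hc
  obtain ⟨b, hb⟩ := exists_forall_lt_measure_image_boundedPrefix μ g hc
  refine ⟨g '' _, image_subset_range _ _, (isCompact_pi_Iic b).image hg, ?_⟩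
  have hanti : Antitone fun k => closure (g '' boundedPrefix b k) :=
    fun _ _ hkl => closure_mono (image_mono (boundedPrefix_antitone b hkl))
  calc c ≤ ⨅ k, μ (closure (g '' boundedPrefix b k)) :=
        le_iInf fun k => (hb k).le.trans (measure_mono subset_closure)
    _ = μ (⋂ k, closure (g '' boundedPrefix b k)) :=
        (hanti.measure_iInter (fun _ => isClosed_closure.measurableSet.nullMeasurableSet)
          ⟨0, measure_ne_top _ _⟩).symm
    _ ≤ μ (g '' _) := measure_mono (iInter_closure_image_boundedPrefix_subset hg b)

theorem exists_isCompact_subset_measure_diff_le [IsFiniteMeasure μ] (hA : AnalyticSet A)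
    {ε : ℝ≥0∞} (hε : ε ≠ 0) : ∃ K ⊆ A, IsCompact K ∧ μ (A \ K) ≤ ε := by
  rcases eq_or_ne (μ A) 0 with h0 | h0
  · exact ⟨∅, empty_subset _, isCompact_empty, by simp [h0]⟩
  obtain ⟨K, hKA, hK, hle⟩ :=
    hA.exists_isCompact_subset_le_measure μ (ENNReal.sub_lt_self (measure_ne_top μ A) h0 hε)
  refine ⟨K, hKA, hK, (measure_sdiff_le_iff_le_add hK.measurableSet.nullMeasurableSet hKA
    (measure_ne_top μ K)).2 ?_⟩
  exact tsub_le_iff_right.1 hle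

theorem exists_isSigmaCompact_subset_measure_diff_eq_zero [SFinite μ] (hA : AnalyticSet A) :
    ∃ S ⊆ A, IsSigmaCompact S ∧ μ (A \ S) = 0 := by
  have hK : ∀ n : ℕ, ∃ K ⊆ A, IsCompact K ∧ μ.toFinite (A \ K) ≤ (n : ℝ≥0∞)⁻¹ :=
    fun n => hA.exists_isCompact_subset_measure_diff_le _ (by simp)
  choose K hKA hK hdiff using hK
  refine ⟨⋃ n, K n, iUnion_subset hKA, ⟨K, hK, rfl⟩, absolutelyContinuous_toFinite μ ?_⟩
  by_contra h
  obtain ⟨n, hn⟩ := ENNReal.exists_inv_nat_lt h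
  exact ((measure_mono (sdiff_subset_sdiff_right (subset_iUnion K n))).trans (hdiff n)).not_gt hn

end MeasureTheory.AnalyticSet

instance : Uncountable (ℕ → Bool) := by
  rw [uncountable_iff_forall_not_surjective]
  intro f hf
  obtain ⟨n, hn⟩ := hf fun n => !f n n
  simpa using congrFun hn n

theorem exists_pairwise_disjoint_isClosed_not_countable :
    ∃ F : (ℕ → Bool) → Set (ℕ → Bool),
      Pairwise (Disjoint on F) ∧ ∀ t, IsClosed (F t) ∧ ¬(F t).Countable := by
  refine ⟨fun t => {x | ∀ n, x (2 * n) = t n}, fun t t' htt' => ?_, fun t => ⟨?_, ?_⟩⟩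
  · refine disjoint_left.2 fun x hx hx' => htt' (funext fun n => ?_)
    rw [← hx n, hx' n]
  · simp only [ofPred_forall]
    exact isClosed_iInter fun n => isClosed_eq (continuous_apply _) continuous_const
  · -- the even coordinates are fixed by `t`, the odd ones are free
    let merge : (ℕ → Bool) → ℕ → Bool := fun s k => if k % 2 = 0 then t (k / 2) else s (k / 2)
    have hmerge : range merge ⊆ {x | ∀ n, x (2 * n) = t n} := by
      rintro _ ⟨s, rfl⟩ n
      simp [merge]
    have hinj : Injective merge := fun s s' h => funext fun n => by
      simpa [merge, Nat.mul_add_mod, Nat.mul_add_div] using congrFun h (2 * n + 1)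
    exact fun h => not_countable_univ ((h.mono hmerge).preimage hinj |>.mono (by simp))

theorem IsClosed.exists_pairwise_disjoint_isCompact_not_countable {Y : Type*}
    [TopologicalSpace Y] [PolishSpace Y] {C : Set Y} (hC : IsClosed C) (hunc : ¬C.Countable) :
    ∃ E : (ℕ → Bool) → Set Y,
      Pairwise (Disjoint on E) ∧ ∀ t, E t ⊆ C ∧ IsCompact (E t) ∧ ¬(E t).Countable := by
  obtain ⟨g, hgC, hg, hginj⟩ := hC.exists_nat_bool_injection_of_not_countable hunc
  obtain ⟨F, hFdisj, hF⟩ := exists_pairwise_disjoint_isClosed_not_countable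
  refine ⟨fun t => g '' F t, fun t t' htt' => ?_, fun t => ⟨?_, ?_, ?_⟩⟩
  · exact (hFdisj htt').image hginj.injOn (subset_univ _) (subset_univ _)
  · exact (image_subset_range g _).trans hgC
  · exact (hF t).1.isCompact.image hg
  · exact fun h => (hF t).2 (countable_of_injective_of_countable_image hginj.injOn h)

theorem IsCompact.countable_image_of_forall_measure_eq_zero {X Y : Type*} [TopologicalSpace X]
    [T2Space X] [MeasurableSpace X] [OpensMeasurableSpace X] [TopologicalSpace Y] [PolishSpace Y]
    (μ : Measure X) [SFinite μ] {f : X → Y} (hf : Continuous f) {K : Set X} (hK : IsCompact K)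
    (h : ∀ B ⊆ K, μ B = 0 → (f '' B).Countable) : (f '' K).Countable := by
  by_contra hunc
  obtain ⟨E, hEdisj, hE⟩ :=
    (hK.image hf).isClosed.exists_pairwise_disjoint_isCompact_not_countable hunc
  have hpos : {t | 0 < μ (K ∩ f ⁻¹' E t)}.Countable :=
    Measure.countable_meas_pos_of_disjoint_iUnion
      (fun t => hK.measurableSet.inter ((hE t).2.1.isClosed.preimage hf).measurableSet)
      fun t t' htt' => (hEdisj htt').preimage f |>.inter_left' K |>.inter_right' K
  obtain ⟨t, ht⟩ : ∃ t, μ (K ∩ f ⁻¹' E t) = 0 := by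
    by_contra! hne
    exact not_countable_univ (hpos.mono fun t _ => pos_iff_ne_zero.2 (hne t))
  apply (hE t).2.2
  rw [← inter_eq_right.2 (hE t).1, ← image_inter_preimage]
  exact h _ inter_subset_left ht

theorem stmt_5_general (A : Set ℝ) (hA : MeasureTheory.AnalyticSet A)
    (f : ℝ → ℝ) (hf : Continuous f)
    (hsmall : ∀ B : Set ℝ, B ⊆ A → volume B = 0 → (f '' B).Countable) :
    (f '' A).Countable := by
  obtain ⟨_, hSA, ⟨K, hK, rfl⟩, hnull⟩ :=
    hA.exists_isSigmaCompact_subset_measure_diff_eq_zero volume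
  have hcover : f '' A ⊆ f '' (A \ ⋃ n, K n) ∪ ⋃ n, f '' K n := by
    rw [← image_iUnion, ← image_union, sdiff_union_self]
    exact image_mono subset_union_left
  refine ((hsmall _ sdiff_subset hnull).union (countable_iUnion fun n => ?_)).mono hcover
  exact (hK n).countable_image_of_forall_measure_eq_zero volume hf
    fun B hB => hsmall B (hB.trans ((subset_iUnion K n).trans hSA))

theorem stmt_5 (A : Set ℝ) (hA : MeasureTheory.AnalyticSet A) (hApos : 0 < volume A)
    (f : ℝ → ℝ) (hf : Continuous f)
    (hsmall : ∀ B : Set ℝ, B ⊆ A → volume B = 0 → (f '' B).Countable) :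
    (f '' A).Countable :=
  stmt_5_general A hA f hf hsmall
end

section
/- Let a < b be reals and let f : ℝ → ℝ be a continuous function such that for every subset B ⊆ [a,b] with Lebesgue measure zero, the image f(B) is countable. Then f is constant on [a,b]. -/
/-!
If `f` is not constant on `[a, b]`, then `f '' [a, b]` contains a nondegenerate interval `J`.
A Borel isomorphism `J ≃ ℝ × ℝ` splits `J` into uncountably many disjoint uncountable Borel
sets, so one of them, `S`, is null for the image under `f` of Lebesgue measure on `[a, b]`.
Then `B = f⁻¹(S) ∩ [a, b]` is Lebesgue null while `f '' B = S` is uncountable.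
-/

open MeasureTheory Set

theorem MeasurableSet.exists_subset_not_countable_measure_zero {α : Type*} [MeasurableSpace α]
    [StandardBorelSpace α] (μ : Measure α) [SFinite μ] {K : Set α} (hK : MeasurableSet K)
    (hKc : ¬K.Countable) : ∃ S ⊆ K, MeasurableSet S ∧ ¬S.Countable ∧ μ S = 0 := by
  have hKstd := hK.standardBorel
  have hKc' : ¬Countable K := by rwa [countable_coe_iff]
  let e : K ≃ᵐ ℝ × ℝ := PolishSpace.measurableEquivOfNotCountable hKc' not_countable
  let g (y : ℝ) : ℝ → α := fun z => e.symm (y, z)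
  have hg (y : ℝ) : MeasurableEmbedding (g y) :=
    (MeasurableEmbedding.subtype_coe hK).comp
      (e.symm.measurableEmbedding.comp (measurableEmbedding_prodMk_left y))
  have hdisj : Pairwise fun y y' => Disjoint (range (g y)) (range (g y')) := by
    intro y y' hyy'
    refine disjoint_left.2 ?_
    rintro _ ⟨z, rfl⟩ ⟨z', hz'⟩
    exact hyy' (congrArg Prod.fst (e.symm.injective (Subtype.val_injective hz'))).symm
  have hcount := Measure.countable_meas_pos_of_disjoint_iUnion (μ := μ)
    (fun y => (hg y).measurableSet_range) hdisj
  obtain ⟨y, hy⟩ : {y | 0 < μ (range (g y))}ᶜ.Nonempty :=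
    nonempty_compl.2 fun h => not_countable_univ (h ▸ hcount)
  refine ⟨range (g y), ?_, (hg y).measurableSet_range, ?_, by simpa using hy⟩
  · rintro _ ⟨z, rfl⟩
    exact (e.symm (y, z)).2
  · rw [← countable_coe_iff, ← (Equiv.ofInjective _ (hg y).injective).countable_iff]
    exact not_countable

theorem exists_measure_zero_subset_image_not_countable {α β : Type*} [MeasurableSpace α]
    [MeasurableSpace β] [StandardBorelSpace β] (μ : Measure α) [SFinite μ] {f : α → β}
    (hf : Measurable f) {s : Set α} {K : Set β} (hK : MeasurableSet K) (hKc : ¬K.Countable)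
    (hKs : K ⊆ f '' s) : ∃ B ⊆ s, μ B = 0 ∧ ¬(f '' B).Countable := by
  obtain ⟨S, hSK, hS, hSc, hμS⟩ :=
    hK.exists_subset_not_countable_measure_zero ((μ.restrict s).map f) hKc
  refine ⟨f ⁻¹' S ∩ s, inter_subset_right, ?_, ?_⟩
  · rwa [← Measure.restrict_apply (hf hS), ← Measure.map_apply hf hS]
  · rwa [image_preimage_inter, inter_eq_left.2 (hSK.trans hKs)]

theorem not_countable_Icc_real {c d : ℝ} (h : c < d) : ¬(Icc c d).Countable := fun hc => by
  simpa [h.not_ge] using hc.measure_zero volume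

theorem stmt_6_general (a b : ℝ) (f : ℝ → ℝ) (hf : Continuous f)
    (hsmall : ∀ B : Set ℝ, B ⊆ Set.Icc a b → volume B = 0 → (f '' B).Countable) :
    ∃ c : ℝ, ∀ x ∈ Set.Icc a b, f x = c := by
  refine ⟨f a, fun x hx => by_contra fun hne => ?_⟩
  have hvalues : uIcc (f a) (f x) ⊆ f '' Icc a b :=
    (intermediate_value_uIcc hf.continuousOn).trans
      (image_mono (uIcc_subset_Icc (left_mem_Icc.2 (hx.1.trans hx.2)) hx))
  have hJ : ¬(uIcc (f a) (f x)).Countable := not_countable_Icc_real (min_lt_max.2 (Ne.symm hne))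
  obtain ⟨B, hB, hB0, hBc⟩ := exists_measure_zero_subset_image_not_countable volume
    hf.measurable measurableSet_uIcc hJ hvalues
  exact hBc (hsmall B hB hB0)

theorem stmt_6 (a b : ℝ) (hab : a < b) (f : ℝ → ℝ) (hf : Continuous f)
    (hsmall : ∀ B : Set ℝ, B ⊆ Set.Icc a b → volume B = 0 → (f '' B).Countable) :
    ∃ c : ℝ, ∀ x ∈ Set.Icc a b, f x = c :=
  stmt_6_general a b f hf hsmall
end

section
/- Assume the continuum hypothesis. Then there exists a function f : ℝ → ℝ such that: (i) for every set A ⊆ ℝ with Lebesgue measure zero, the image f(A) is countable; (ii) f is surjective onto ℝ; (iii) for every set A ⊆ ℝ with positive Lebesgue outer measure, the image f(A) is uncountable; and (iv) for every y ∈ ℝ, the fiber f⁻¹({y}) is an uncountable Borel set of Lebesgue measure zero. -/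
/-!
Under CH, list the Borel null sets as `(ν i)_{i < ω₁}` and let `r x` be the least `i` with
`x ∈ ν i`. The pieces `r ⁻¹' {i} = ν i \ ⋃ j < i, ν j` are Borel null, and every null set lies
in some `ν i`, so `r` maps it into the countable set `Iic i`. Uncountably many pieces are
uncountable: otherwise their union `U` is Borel null, and the co-null set `Uᶜ` contains an
uncountable Borel null set (Borel isomorphism theorem), say `ν i`, which would then be covered by
the countably many countable pieces `r ⁻¹' {j}`, `j ≤ i`. Composing `r` with a map `ω₁ → ℝ` with
countable fibres that sends the indices of uncountable pieces onto `ℝ` gives `f`.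
-/

open MeasureTheory Set

section NullSubset

open Function

variable {α : Type*} [MeasurableSpace α] [StandardBorelSpace α] {μ : Measure α} [SFinite μ]

theorem MeasurableSet.exists_subset_null_not_countable {s : Set α} (hs : MeasurableSet s)
    (hsc : ¬ s.Countable) : ∃ t ⊆ s, MeasurableSet t ∧ μ t = 0 ∧ ¬ t.Countable := by
  have := hs.standardBorel
  -- Only countably many of the disjoint slices `{a} × ℝ` of `s ≃ᵐ ℝ × ℝ` have positive measure.
  let e : s ≃ᵐ ℝ × ℝ := PolishSpace.measurableEquivOfNotCountable
    (by rwa [← countable_coe_iff] at hsc) not_countable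
  let slice (a : ℝ) : Set α := (↑) '' (e ⁻¹' ({a} ×ˢ univ))
  have hmeas (a : ℝ) : MeasurableSet (slice a) :=
    hs.subtype_image (e.measurable ((measurableSet_singleton a).prod MeasurableSet.univ))
  have hdisj : Pairwise (Disjoint on slice) := fun a b hab ↦
    (disjoint_image_iff Subtype.val_injective).2 <| Disjoint.preimage _ <|
      (disjoint_singleton.2 hab).set_prod_left _ _
  obtain ⟨a, ha⟩ : {a | 0 < μ (slice a)}ᶜ.Nonempty :=
    nonempty_compl.2 fun h ↦ not_countable_univ
      (h ▸ Measure.countable_meas_pos_of_disjoint_iUnion hmeas hdisj)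
  refine ⟨slice a, image_subset_iff.2 fun x _ ↦ x.2, hmeas a,
    nonpos_iff_eq_zero.1 (not_lt.1 ha), fun hc ↦ not_countable_univ (α := ℝ) ?_⟩
  have := ((hc.preimage Subtype.val_injective).image e).preimage (Prod.mk_right_injective a)
  simpa [slice, Subtype.val_injective.preimage_image, e.image_preimage] using this

theorem MeasurableSet.exists_null_not_countable_disjoint [NullSingletonClass μ] [NeZero μ]
    {u : Set α} (hu : MeasurableSet u) (hu0 : μ u = 0) :
    ∃ t, MeasurableSet t ∧ μ t = 0 ∧ ¬ t.Countable ∧ Disjoint t u := by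
  have hcompl : ¬ uᶜ.Countable := fun hc ↦ NeZero.ne μ <| Measure.measure_univ_eq_zero.1 <| by
    rw [← union_compl_self u]
    exact measure_union_null hu0 (hc.measure_zero μ)
  obtain ⟨t, htu, ht, ht0, htc⟩ := hu.compl.exists_subset_null_not_countable (μ := μ) hcompl
  exact ⟨t, ht, ht0, htc, subset_compl_iff_disjoint_right.1 htu⟩

end NullSubset

section Cardinal

open Cardinal

universe u

theorem Cardinal.continuum_eq_aleph_one_of_other_universe.{v, w} (h : continuum.{v} = ℵ₁) :
    continuum.{w} = ℵ₁ := by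
  apply lift_injective.{v, w}
  rw [lift_continuum, lift_aleph, ← lift_continuum.{w, v}, h, lift_aleph]
  simp

theorem Cardinal.mk_eq_aleph_one_of_not_countable {ι : Type u} {s : Set ι} (hι : #ι ≤ ℵ₁)
    (hs : ¬ s.Countable) : #s = ℵ₁ :=
  ((mk_set_le s).trans hι).antisymm
    (aleph_one_le_iff.2 (not_le.1 (mt le_aleph0_iff_set_countable.1 hs)))

theorem countable_Iic_ord_toType_aleph_one (i : (ℵ₁ : Cardinal.{u}).ord.ToType) :
    (Iic i).Countable := by
  rw [← Iio_insert]
  refine (le_aleph0_iff_set_countable.1 (lt_aleph_one_iff.1 ?_)).insert i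
  simpa using mk_Iio_lt i (by simp)

theorem exists_range_eq_of_mk_le {ι β : Type u} {S : Set β} (hS : S.Nonempty) (h : #S ≤ #ι) :
    ∃ ν : ι → β, range ν = S := by
  obtain ⟨g⟩ := h
  have := hS.to_subtype
  exact ⟨(↑) ∘ Function.invFun g, by
    rw [(Function.invFun_surjective g.injective).range_comp, Subtype.range_coe]⟩

theorem exists_countable_fibers_surjOn {ι β : Type u} (s : Set ι) (hs : #s = #β)
    (hι : #ι ≤ #β) : ∃ π : ι → β, (∀ y, (π ⁻¹' {y}).Countable) ∧ SurjOn π s univ := by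
  classical
  obtain ⟨e⟩ := Cardinal.eq.1 hs
  obtain ⟨d⟩ := hι
  refine ⟨fun i ↦ if h : i ∈ s then e ⟨i, h⟩ else d i, fun y ↦ ?_,
    fun y _ ↦ ⟨e.symm y, (e.symm y).2, by simp⟩⟩
  refine ((countable_singleton y).preimage d.injective |>.insert ((e.symm y : ι))).mono ?_
  intro i hi
  by_cases h : i ∈ s
  · left
    simp only [mem_preimage, mem_singleton_iff, dif_pos h] at hi
    simp [← hi]
  · right
    simpa [h] using hi

theorem MeasurableSpace.mk_setOf_measurableSet_le_continuum {α : Type*} [MeasurableSpace α]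
    [MeasurableSpace.CountablyGenerated α] : #{s : Set α | MeasurableSet s} ≤ 𝔠 := by
  conv_lhs => rw [← MeasurableSpace.generateFrom_countableGeneratingSet (α := α)]
  exact MeasurableSpace.cardinal_measurableSet_le_continuum <|
    (mk_le_aleph0_iff.2 (MeasurableSpace.countable_countableGeneratingSet).to_subtype).trans
      aleph0_le_continuum

theorem MeasureTheory.exists_range_eq_setOf_null {α ι : Type u} [MeasurableSpace α]
    [MeasurableSpace.CountablyGenerated α] (μ : Measure α) (hι : 𝔠 ≤ #ι) :
    ∃ ν : ι → Set α, range ν = {s | MeasurableSet s ∧ μ s = 0} :=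
  exists_range_eq_of_mk_le ⟨∅, .empty, measure_empty⟩ <|
    ((mk_le_mk_of_subset fun _ hs ↦ hs.1).trans
      MeasurableSpace.mk_setOf_measurableSet_le_continuum).trans hι

end Cardinal

theorem MeasureTheory.exists_mem_of_range_eq_setOf_null {α ι : Type*} [MeasurableSpace α]
    [MeasurableSingletonClass α] {μ : Measure α} [NullSingletonClass μ] {ν : ι → Set α}
    (hν : range ν = {s | MeasurableSet s ∧ μ s = 0}) (x : α) : ∃ i, x ∈ ν i := by
  obtain ⟨i, hi⟩ : {x} ∈ range ν := hν ▸ ⟨measurableSet_singleton x, measure_singleton x⟩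
  exact ⟨i, hi ▸ mem_singleton x⟩

section LeastIndex

variable {α ι : Type*} [LinearOrder ι]

def IsLeastIndex (ν : ι → Set α) (r : α → ι) : Prop :=
  ∀ x, IsLeast {i | x ∈ ν i} (r x)

theorem exists_isLeastIndex [WellFoundedLT ι] {ν : ι → Set α} (hν : ∀ x, ∃ i, x ∈ ν i) :
    ∃ r, IsLeastIndex ν r :=
  ⟨fun x ↦ wellFounded_lt.min _ (hν x),
    fun x ↦ ⟨wellFounded_lt.min_mem _ (hν x), fun _ hi ↦ wellFounded_lt.min_le hi⟩⟩

namespace IsLeastIndex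

variable {ν : ι → Set α} {r : α → ι}

theorem preimage_singleton_subset (hr : IsLeastIndex ν r) (i : ι) : r ⁻¹' {i} ⊆ ν i := by
  rintro x rfl
  exact (hr x).1

theorem preimage_singleton_eq (hr : IsLeastIndex ν r) (i : ι) :
    r ⁻¹' {i} = ν i \ ⋃ j < i, ν j := by
  ext x
  simp only [mem_preimage, mem_singleton_iff, mem_sdiff, mem_iUnion, exists_prop, not_exists,
    not_and]
  refine ⟨?_, fun ⟨hx, hlt⟩ ↦ ((hr x).2 hx).antisymm (not_lt.1 fun h ↦ hlt _ h (hr x).1)⟩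
  rintro rfl
  exact ⟨(hr x).1, fun j hj hx ↦ (hj.trans_le ((hr x).2 hx)).false⟩

theorem image_subset_Iic (hr : IsLeastIndex ν r) {A : Set α} {i : ι} (hA : A ⊆ ν i) :
    r '' A ⊆ Iic i := by
  rintro _ ⟨x, hx, rfl⟩
  exact (hr x).2 (hA hx)

variable [MeasurableSpace α] {μ : Measure α}

theorem measurableSet_preimage_singleton (hr : IsLeastIndex ν r)
    (hι : ∀ i : ι, (Iic i).Countable) (hν : ∀ i, MeasurableSet (ν i)) (i : ι) :
    MeasurableSet (r ⁻¹' {i}) := by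
  rw [hr.preimage_singleton_eq]
  exact (hν i).diff <| .biUnion ((hι i).mono Iio_subset_Iic_self) fun j _ ↦ hν j

theorem countable_image_of_null (hr : IsLeastIndex ν r) (hι : ∀ i : ι, (Iic i).Countable)
    (hν : range ν = {s | MeasurableSet s ∧ μ s = 0}) {A : Set α} (hA : μ A = 0) :
    (r '' A).Countable := by
  obtain ⟨N, hAN, hN, hN0⟩ := exists_measurable_superset_of_null hA
  obtain ⟨i, rfl⟩ : N ∈ range ν := hν ▸ ⟨hN, hN0⟩
  exact (hι i).mono (hr.image_subset_Iic hAN)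

theorem not_countable_setOf_not_countable_preimage [StandardBorelSpace α] [SFinite μ]
    [NullSingletonClass μ] [NeZero μ] (hr : IsLeastIndex ν r) (hι : ∀ i : ι, (Iic i).Countable)
    (hν : range ν = {s | MeasurableSet s ∧ μ s = 0}) :
    ¬ {i | ¬ (r ⁻¹' {i}).Countable}.Countable := by
  intro hT
  have hνmeas (i : ι) : MeasurableSet (ν i) := (hν.le ⟨i, rfl⟩).1
  have hνnull (i : ι) : μ (ν i) = 0 := (hν.le ⟨i, rfl⟩).2
  obtain ⟨B, hB, hB0, hBc, hBdisj⟩ := MeasurableSet.exists_null_not_countable_disjoint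
    (.biUnion hT fun i _ ↦ hr.measurableSet_preimage_singleton hι hνmeas i)
    ((measure_biUnion_null_iff hT).2 fun i _ ↦
      measure_mono_null (hr.preimage_singleton_subset i) (hνnull i))
  refine hBc <| ((hr.countable_image_of_null hι hν hB0).biUnion fun i hi ↦ ?_).mono
    ((subset_preimage_image r B).trans (biUnion_preimage_singleton r _).ge)
  obtain ⟨x, hxB, rfl⟩ := hi
  by_contra hc
  exact hBdisj.ne_of_mem hxB (mem_biUnion hc rfl) rfl

end IsLeastIndex

end LeastIndex

section Collapse

variable {α ι β : Type*} {r : α → ι} {π : ι → β}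

theorem preimage_comp_singleton_eq_biUnion (y : β) :
    (π ∘ r) ⁻¹' {y} = ⋃ i ∈ π ⁻¹' {y}, r ⁻¹' {i} := by
  rw [biUnion_preimage_singleton, preimage_comp]

theorem measurableSet_preimage_comp_singleton [MeasurableSpace α]
    (hr : ∀ i, MeasurableSet (r ⁻¹' {i})) (hπ : ∀ y, (π ⁻¹' {y}).Countable) (y : β) :
    MeasurableSet ((π ∘ r) ⁻¹' {y}) := by
  rw [preimage_comp_singleton_eq_biUnion]
  exact .biUnion (hπ y) fun i _ ↦ hr i

theorem measure_preimage_comp_singleton [MeasurableSpace α] {μ : Measure α}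
    (hr : ∀ i, μ (r ⁻¹' {i}) = 0) (hπ : ∀ y, (π ⁻¹' {y}).Countable) (y : β) :
    μ ((π ∘ r) ⁻¹' {y}) = 0 := by
  rw [preimage_comp_singleton_eq_biUnion]
  exact (measure_biUnion_null_iff (hπ y)).2 fun i _ ↦ hr i

theorem not_countable_preimage_comp_singleton
    (hπ : SurjOn π {i | ¬ (r ⁻¹' {i}).Countable} univ) (y : β) :
    ¬ ((π ∘ r) ⁻¹' {y}).Countable := by
  obtain ⟨i, hi, rfl⟩ := hπ (mem_univ y)
  exact fun hc ↦ hi (hc.mono fun x hx ↦ by simp_all)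

end Collapse

theorem MeasureTheory.measure_eq_zero_of_countable_image {α β : Type*} [MeasurableSpace α]
    {μ : Measure α} {f : α → β} (hf : ∀ y, μ (f ⁻¹' {y}) = 0) {A : Set α}
    (hA : (f '' A).Countable) : μ A = 0 :=
  measure_mono_null ((subset_preimage_image f A).trans (biUnion_preimage_singleton f _).ge)
    ((measure_biUnion_null_iff hA).2 fun y _ ↦ hf y)

theorem stmt_7 (hCH : Cardinal.continuum = Cardinal.aleph 1) :
    ∃ f : ℝ → ℝ,
      (∀ A : Set ℝ, volume A = 0 → (f '' A).Countable) ∧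
      Function.Surjective f ∧
      (∀ A : Set ℝ, 0 < volume A → ¬ (f '' A).Countable) ∧
      (∀ y : ℝ, ¬ (f ⁻¹' {y}).Countable ∧ MeasurableSet (f ⁻¹' {y}) ∧
        volume (f ⁻¹' {y}) = 0) := by
  have hℝ : Cardinal.mk ℝ = Cardinal.aleph 1 :=
    Cardinal.mk_real.trans (Cardinal.continuum_eq_aleph_one_of_other_universe hCH)
  let ι := (Cardinal.aleph 1 : Cardinal.{0}).ord.ToType
  have hι : Cardinal.mk ι = Cardinal.mk ℝ := (Cardinal.mk_ord_toType _).trans hℝ.symm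
  obtain ⟨ν, hν⟩ := exists_range_eq_setOf_null (ι := ι) (volume : Measure ℝ)
    (Cardinal.mk_real.symm.trans hι.symm).le
  have hνnull (i : ι) : MeasurableSet (ν i) ∧ volume (ν i) = 0 := hν.le ⟨i, rfl⟩
  obtain ⟨r, hr⟩ := exists_isLeastIndex (exists_mem_of_range_eq_setOf_null hν)
  have hIic : ∀ i : ι, (Iic i).Countable := countable_Iic_ord_toType_aleph_one
  obtain ⟨π, hπ, hπT⟩ := exists_countable_fibers_surjOn _
    ((Cardinal.mk_eq_aleph_one_of_not_countable (Cardinal.mk_ord_toType _).le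
      (hr.not_countable_setOf_not_countable_preimage hIic hν)).trans hℝ.symm) hι.le
  have hnull := measure_preimage_comp_singleton (μ := volume)
    (fun i ↦ measure_mono_null (hr.preimage_singleton_subset i) (hνnull i).2) hπ
  have hunc := not_countable_preimage_comp_singleton (r := r) hπT
  refine ⟨π ∘ r, fun A hA ↦ ?_, fun y ↦ Set.Infinite.nonempty fun h ↦ hunc y h.countable,
    fun A hA hc ↦ hA.ne' (measure_eq_zero_of_countable_image hnull hc), fun y ↦ ⟨hunc y,
      measurableSet_preimage_comp_singleton
        (hr.measurableSet_preimage_singleton hIic fun i ↦ (hνnull i).1) hπ y, hnull y⟩⟩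
  · rw [image_comp]
    exact (hr.countable_image_of_null hIic hν hA).image π
end

section
/- Let A ⊆ ℝ be a set with positive Lebesgue outer measure, and let f : ℝ → ℝ be a continuous function such that for every subset B ⊆ A with Lebesgue measure zero, the image f(B) is meager. Then the image f(A) is meager. -/
/-!
Let `ν` be Lebesgue measure restricted to `A`, pushed forward along `f`. Every s-finite measure on
a separable real normed space vanishes on some residual set `G`: for each finite piece, the atoms
are countable, so some countable dense set `D` avoids them, and outer regularity puts `D` inside
open sets of arbitrarily small measure, whose intersection is a null dense `G_δ`. Then
`B = A ∩ f⁻¹ G` is null, and `f '' A ⊆ f '' B ∪ Gᶜ` is meagre.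
-/

open MeasureTheory Set

theorem exists_mem_residual_measure_eq_zero_of_dense {X : Type*} [TopologicalSpace X]
    [MeasurableSpace X] (μ : Measure X) [μ.OuterRegular] {D : Set X} (hD : Dense D)
    (hμD : μ D = 0) : ∃ G ∈ residual X, μ G = 0 := by
  have hU : ∀ n : ℕ, ∃ U ⊇ D, IsOpen U ∧ μ U < (n : ENNReal)⁻¹ := fun n =>
    D.exists_isOpen_lt_of_lt _ (by simp [hμD])
  choose U hDU hUo hμU using hU
  refine ⟨⋂ n, U n, countable_iInter_mem.2 fun n =>
    residual_of_dense_open (hUo n) (hD.mono (hDU n)), ?_⟩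
  refine le_antisymm (ENNReal.le_of_forall_pos_le_add fun ε hε _ => ?_) bot_le
  obtain ⟨n, hn⟩ := ENNReal.exists_inv_nat_lt (ENNReal.coe_ne_zero.2 hε.ne')
  calc μ (⋂ n, U n) ≤ μ (U n) := measure_mono (iInter_subset U n)
    _ ≤ ε := (hμU n).le.trans hn.le
    _ = 0 + ε := (zero_add _).symm

section NormedSpace

variable {E : Type*} [NormedAddCommGroup E] [NormedSpace ℝ E] [Nontrivial E]
  [SecondCountableTopology E] [MeasurableSpace E] [BorelSpace E]

theorem exists_mem_residual_measure_eq_zero_of_isFiniteMeasure (μ : Measure E)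
    [IsFiniteMeasure μ] : ∃ G ∈ residual E, μ G = 0 := by
  have hatoms : {x : E | 0 < μ {x}}.Countable :=
    Measure.countable_meas_pos_of_disjoint_iUnion (fun x => measurableSet_singleton x)
      fun x y hxy => disjoint_singleton.2 hxy
  obtain ⟨D, hD, hDc, hDd⟩ := (hatoms.dense_compl ℝ).exists_countable_dense_subset
  refine exists_mem_residual_measure_eq_zero_of_dense μ hDd ?_
  rw [← biUnion_of_singleton D, measure_biUnion_null_iff hDc]
  intro x hx
  simpa using hD hx

theorem exists_mem_residual_measure_eq_zero (μ : Measure E) [SFinite μ] :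
    ∃ G ∈ residual E, μ G = 0 := by
  choose G hG hμG using fun n => exists_mem_residual_measure_eq_zero_of_isFiniteMeasure
    (sfiniteSeq μ n)
  refine ⟨⋂ n, G n, countable_iInter_mem.2 hG, ?_⟩
  rw [← sum_sfiniteSeq μ, Measure.sum_apply_of_countable, ENNReal.tsum_eq_zero]
  exact fun n => measure_mono_null (iInter_subset G n) (hμG n)

theorem isMeagre_image_of_forall_measure_eq_zero {X : Type*} [MeasurableSpace X]
    (μ : Measure X) [SFinite μ] {f : X → E} (hf : Measurable f) (A : Set X)
    (hnull : ∀ B ⊆ A, μ B = 0 → IsMeagre (f '' B)) : IsMeagre (f '' A) := by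
  obtain ⟨G, hG, hμG⟩ := exists_mem_residual_measure_eq_zero ((μ.restrict A).map f)
  have hB : μ (A ∩ f ⁻¹' G) = 0 := by
    refine le_antisymm ?_ bot_le
    calc μ (A ∩ f ⁻¹' G) = μ (f ⁻¹' G ∩ A) := by rw [inter_comm]
      _ ≤ μ.restrict A (f ⁻¹' G) := Measure.le_restrict_apply A _
      _ ≤ (μ.restrict A).map f G := Measure.le_map_apply hf.aemeasurable G
      _ = 0 := hμG
  have hcover : f '' A ⊆ f '' (A ∩ f ⁻¹' G) ∪ Gᶜ := by
    rintro _ ⟨x, hx, rfl⟩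
    by_cases hxG : f x ∈ G
    · exact Or.inl ⟨x, ⟨hx, hxG⟩, rfl⟩
    · exact Or.inr hxG
  exact ((hnull _ inter_subset_left hB).union (by rwa [IsMeagre, compl_compl])).mono hcover

end NormedSpace

theorem stmt_8_general (A : Set ℝ)
    (f : ℝ → ℝ) (hf : Continuous f)
    (hsmall : ∀ B : Set ℝ, B ⊆ A → volume B = 0 → IsMeagre (f '' B)) :
    IsMeagre (f '' A) :=
  isMeagre_image_of_forall_measure_eq_zero volume hf.measurable A hsmall

theorem stmt_8 (A : Set ℝ) (hApos : 0 < volume A)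
    (f : ℝ → ℝ) (hf : Continuous f)
    (hsmall : ∀ B : Set ℝ, B ⊆ A → volume B = 0 → IsMeagre (f '' B)) :
    IsMeagre (f '' A) :=
  stmt_8_general A f hf hsmall
end

section
/- Let f : ℝ → ℝ be Lebesgue measurable, and suppose that for every set A ⊆ ℝ with Lebesgue measure zero, the image f(A) is meager. Then the range f(ℝ) is meager. -/
/-! A finite measure on a separable metric space without isolated points gives small measure to
an open set that is dense: around each point `q` of a countable dense set take a punctured ball
`ball q r \ {q}`, which still has `q` in its closure and whose measure tends to `0` as `r → 0`.
Intersecting such dense open sets of measures `1 / n` yields a comeagre null set, so every s-finite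
measure lives on a meagre set. For `f` as in the theorem, let `s` be a comeagre set with
`f⁻¹' s` null; then `range f ⊆ f '' (f⁻¹' s) ∪ sᶜ` is meagre. -/

open MeasureTheory Set Filter Metric Topology TopologicalSpace
open scoped ENNReal

namespace MeasureTheory

variable {X : Type*} [MetricSpace X] [∀ x : X, NeBot (𝓝[≠] x)]
  [MeasurableSpace X] [OpensMeasurableSpace X]

theorem exists_isOpen_mem_closure_measure_lt (μ : Measure X) [IsFiniteMeasure μ] (x : X)
    {ε : ℝ≥0∞} (hε : ε ≠ 0) : ∃ V, IsOpen V ∧ x ∈ closure V ∧ μ V < ε := by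
  have hopen (r : ℝ) : IsOpen (ball x r \ {x}) := isOpen_ball.sdiff isClosed_singleton
  have hempty : ⋂ r > (0 : ℝ), ball x r \ {x} = ∅ := by
    refine eq_empty_of_forall_notMem fun y hy => ?_
    simp only [mem_iInter, Set.mem_sdiff, mem_ball, mem_singleton_iff] at hy
    have hdist : dist y x = 0 :=
      le_antisymm (le_of_forall_gt fun r hr => (hy r hr).1) dist_nonneg
    exact (hy 1 one_pos).2 (dist_eq_zero.1 hdist)
  have hlim : Tendsto (fun r => μ (ball x r \ {x})) (𝓝[>] 0) (𝓝 0) := by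
    simpa only [hempty, measure_empty, Function.comp_def] using tendsto_measure_biInter_gt (μ := μ)
      (fun r _ => (hopen r).nullMeasurableSet)
      (fun _ _ _ hij => sdiff_subset_sdiff_left (ball_subset_ball hij))
      ⟨1, one_pos, measure_ne_top μ _⟩
  obtain ⟨r, hrμ, hr⟩ :=
    ((hlim.eventually (gt_mem_nhds (pos_iff_ne_zero.2 hε))).and self_mem_nhdsWithin).exists
  refine ⟨ball x r \ {x}, hopen r, mem_closure_iff_nhds.2 fun t ht => ?_, hrμ⟩
  have hpunct : (t ∩ ball x r) \ {x} ∈ 𝓝[≠] x :=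
    sdiff_mem_nhdsWithin_compl (inter_mem ht (ball_mem_nhds x hr)) {x}
  obtain ⟨y, ⟨hyt, hyb⟩, hyx⟩ := Filter.nonempty_of_mem hpunct
  exact ⟨y, hyt, hyb, hyx⟩

theorem exists_isOpen_dense_measure_lt [SeparableSpace X] (μ : Measure X) [IsFiniteMeasure μ]
    {ε : ℝ≥0∞} (hε : ε ≠ 0) : ∃ U, IsOpen U ∧ Dense U ∧ μ U < ε := by
  obtain ⟨Q, hQc, hQd⟩ := exists_countable_dense X
  have := hQc.to_subtype
  obtain ⟨δ, hδpos, hδsum⟩ := ENNReal.exists_pos_sum_of_countable' hε Q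
  choose V hVopen hqV hVμ using fun q : Q => exists_isOpen_mem_closure_measure_lt μ q (hδpos q).ne'
  refine ⟨⋃ q, V q, isOpen_iUnion hVopen, ?_, ?_⟩
  · refine dense_closure.1 (hQd.mono fun q hq => ?_)
    exact closure_mono (subset_iUnion V ⟨q, hq⟩) (hqV ⟨q, hq⟩)
  · calc μ (⋃ q, V q) ≤ ∑' q, μ (V q) := measure_iUnion_le V
      _ ≤ ∑' q, δ q := ENNReal.tsum_le_tsum fun q => (hVμ q).le
      _ < ε := hδsum

theorem disjoint_residual_ae_of_isFiniteMeasure [SeparableSpace X] (μ : Measure X)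
    [IsFiniteMeasure μ] : Disjoint (residual X) (ae μ) := by
  choose U hUopen hUdense hUμ using fun n : ℕ =>
    exists_isOpen_dense_measure_lt μ (ENNReal.inv_ne_zero.2 (ENNReal.natCast_ne_top n))
  have hnull : μ (⋂ n, U n) = 0 :=
    nonpos_iff_eq_zero.1 <| ge_of_tendsto' ENNReal.tendsto_inv_nat_nhds_zero fun n =>
      (measure_mono (iInter_subset U n)).trans (hUμ n).le
  refine Filter.disjoint_iff.2 ⟨⋂ n, U n, ?_, (⋂ n, U n)ᶜ, compl_mem_ae_iff.2 hnull,
    disjoint_compl_right⟩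
  exact countable_iInter_mem.2 fun n => residual_of_dense_open (hUopen n) (hUdense n)

theorem disjoint_residual_ae [SeparableSpace X] (μ : Measure X) [SFinite μ] :
    Disjoint (residual X) (ae μ) := by
  rw [← ae_toFinite]
  exact disjoint_residual_ae_of_isFiniteMeasure μ.toFinite

theorem isMeagre_range_of_isMeagre_image_null [SeparableSpace X] {α : Type*} [MeasurableSpace α]
    {μ : Measure α} [SFinite μ] {f : α → X} (hf : AEMeasurable f μ)
    (hsmall : ∀ A, μ A = 0 → IsMeagre (f '' A)) : IsMeagre (range f) := by
  obtain ⟨s, hs, t, ht, hst⟩ := Filter.disjoint_iff.1 (disjoint_residual_ae (μ.map f))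
  have hs_null : μ.map f s = 0 := measure_mono_null hst.subset_compl_right (mem_ae_iff.1 ht)
  have hpre_null : μ (f ⁻¹' s) = 0 :=
    nonpos_iff_eq_zero.1 ((Measure.le_map_apply hf s).trans hs_null.le)
  have hcompl : IsMeagre sᶜ := by rwa [IsMeagre, compl_compl]
  refine ((hsmall _ hpre_null).union hcompl).mono ?_
  rintro _ ⟨y, rfl⟩
  by_cases hy : f y ∈ s
  · exact Or.inl (mem_image_of_mem f hy)
  · exact Or.inr hy

end MeasureTheory

theorem stmt_10 (f : ℝ → ℝ) (hf : NullMeasurable f (volume : Measure ℝ))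
    (hsmall : ∀ A : Set ℝ, volume A = 0 → IsMeagre (f '' A)) :
    IsMeagre (Set.range f) :=
  isMeagre_range_of_isMeagre_image_null hf.aemeasurable hsmall
end

section
/- Let f : ℝ → ℝ be continuous, and suppose that for every set A ⊆ ℝ with Lebesgue measure zero, the image f(A) is meager. Then f is constant. -/
open MeasureTheory Set
open scoped ENNReal

/-! If `f` is not constant, `f` maps a compact interval `K` onto a set containing an open
interval `U`. The push-forward `μ` of Lebesgue measure on `K` is a finite measure on `ℝ`, so by
outer regularity the rationals `ℚ` lie in a dense `G_δ` set `W` with `μ (W \ ℚ) = 0`. The part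
`A` of `K` mapped into `W \ ℚ` is then Lebesgue-null, yet `f '' A ∪ ℚ` contains the
non-meagre set `W ∩ U`, so `f '' A` is not meagre. -/

theorem MeasurableSet.exists_isGδ_superset_measure_sdiff_eq_zero {α : Type*}
    [TopologicalSpace α] [MeasurableSpace α] {μ : Measure α} [μ.OuterRegular] {A : Set α}
    (hA : MeasurableSet A) (hμA : μ A ≠ ∞) : ∃ W, IsGδ W ∧ A ⊆ W ∧ μ (W \ A) = 0 := by
  have hU (n : ℕ) : ∃ U, U ⊇ A ∧ IsOpen U ∧ μ U < ∞ ∧ μ (U \ A) < (n : ℝ≥0∞)⁻¹ :=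
    hA.exists_isOpen_sdiff_lt hμA (ENNReal.inv_ne_zero.2 (ENNReal.natCast_ne_top n))
  choose U hAU hUo _ hμU using hU
  refine ⟨⋂ n, U n, .iInter_of_isOpen hUo, subset_iInter hAU, ?_⟩
  refine le_antisymm (ge_of_tendsto' ENNReal.tendsto_inv_nat_nhds_zero fun n => ?_) bot_le
  exact (measure_mono (sdiff_subset_sdiff_left (iInter_subset U n))).trans (hμU n).le

theorem not_isMeagre_inter_of_mem_residual_of_isOpen {X : Type*} [TopologicalSpace X]
    [BaireSpace X] {W U : Set X} (hW : W ∈ residual X) (hU : IsOpen U) (hUne : U.Nonempty) :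
    ¬ IsMeagre (W ∩ U) := by
  intro h
  have hWc : IsMeagre Wᶜ := by rwa [IsMeagre, compl_compl]
  refine not_isMeagre_of_isOpen hU hUne ((h.union hWc).mono fun x hx => ?_)
  by_cases hxW : x ∈ W
  exacts [Or.inl ⟨hxW, hx⟩, Or.inr hxW]

theorem exists_mem_residual_measure_preimage_sdiff_rat_eq_zero {α : Type*} [MeasurableSpace α]
    {f : α → ℝ} (hf : Measurable f) (ν : Measure α) [IsFiniteMeasure ν] :
    ∃ W ∈ residual ℝ, ν (f ⁻¹' (W \ range ((↑) : ℚ → ℝ))) = 0 := by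
  obtain ⟨W, hWG, hQW, hμW⟩ :=
    (countable_range ((↑) : ℚ → ℝ)).measurableSet.exists_isGδ_superset_measure_sdiff_eq_zero
      (μ := ν.map f) (measure_ne_top _ _)
  refine ⟨W, residual_of_dense_Gδ hWG (Rat.denseRange_cast.mono hQW), ?_⟩
  exact le_antisymm ((Measure.le_map_apply hf.aemeasurable _).trans hμW.le) bot_le

theorem exists_measure_zero_not_isMeagre_image {f : ℝ → ℝ} (hf : Continuous f) {a b : ℝ}
    (hab : f a ≠ f b) : ∃ A : Set ℝ, volume A = 0 ∧ ¬ IsMeagre (f '' A) := by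
  set K := uIcc a b
  set Q := range ((↑) : ℚ → ℝ)
  have : IsFiniteMeasure (volume.restrict K) :=
    isFiniteMeasure_restrict.2 isCompact_uIcc.measure_lt_top.ne
  obtain ⟨W, hW, hμW⟩ :=
    exists_mem_residual_measure_preimage_sdiff_rat_eq_zero hf.measurable (volume.restrict K)
  refine ⟨f ⁻¹' (W \ Q) ∩ K, by rwa [← Measure.restrict_apply' measurableSet_uIcc], fun h => ?_⟩
  set U := Ioo (min (f a) (f b)) (max (f a) (f b))
  have hWU : W ∩ U ⊆ f '' (f ⁻¹' (W \ Q) ∩ K) ∪ Q := by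
    rintro y ⟨hyW, hyU⟩
    by_cases hyQ : y ∈ Q
    · exact Or.inr hyQ
    obtain ⟨x, hxK, rfl⟩ := intermediate_value_uIcc hf.continuousOn (Ioo_subset_Icc_self hyU)
    exact Or.inl ⟨x, ⟨⟨hyW, hyQ⟩, hxK⟩, rfl⟩
  refine not_isMeagre_inter_of_mem_residual_of_isOpen hW isOpen_Ioo
    (nonempty_Ioo.2 (min_lt_max.2 hab)) ((h.union ?_).mono hWU)
  -- `ℚ` is meagre because its complement, the irrationals, is residual
  exact eventually_residual_irrational

theorem stmt_11 (f : ℝ → ℝ) (hf : Continuous f)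
    (hsmall : ∀ A : Set ℝ, volume A = 0 → IsMeagre (f '' A)) :
    ∃ c : ℝ, ∀ x : ℝ, f x = c := by
  by_contra! hnonconst
  obtain ⟨x, hx⟩ := hnonconst (f 0)
  obtain ⟨A, hA, hA_image⟩ := exists_measure_zero_not_isMeagre_image hf hx
  exact hA_image (hsmall A hA)
end

section
/- Let f : ℝ → ℝ have the Baire property (i.e., for every open set U ⊆ ℝ, the preimage f⁻¹(U) differs from some open set by a meager set), and suppose that for every meager set A ⊆ ℝ, the image f(A) has Lebesgue measure zero. Then the range f(ℝ) has Lebesgue measure zero. -/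
/-!
A function with the Baire property is continuous on a residual set `G`. Around the points `d`
of a countable dense subset of `G` choose open sets on which `f|G` stays within `ε_d` of
`f d`, where `∑ ε_d` is small. Their union `U` is dense open, so `f` maps the residual set `G ∩ U`
into a set of small measure, while it maps the meagre complement of `G ∩ U` to a null set.
-/

open MeasureTheory Set Filter Metric
open scoped ENNReal

theorem exists_mem_residual_continuousOn {X Y : Type*} [TopologicalSpace X] [TopologicalSpace Y]
    [SecondCountableTopology Y] {f : X → Y}
    (hf : ∀ U : Set Y, IsOpen U → ∃ V : Set X, IsOpen V ∧ IsMeagre (symmDiff (f ⁻¹' U) V)) :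
    ∃ G ∈ residual X, ContinuousOn f G := by
  obtain ⟨b, hbc, -, hb⟩ := TopologicalSpace.exists_countable_basis Y
  have := hbc.to_subtype
  choose v hvo hvm using fun s : b => hf s (hb.isOpen s.2)
  refine ⟨⋂ s : b, (symmDiff (f ⁻¹' s) (v s))ᶜ, countable_iInter_mem.2 hvm, fun x hx => ?_⟩
  have hG : ∀ s : b, ∀ y ∈ ⋂ s : b, (symmDiff (f ⁻¹' s) (v s))ᶜ, (f y ∈ (s : Set Y) ↔ y ∈ v s) :=
    fun s y hy => by simpa [Set.mem_symmDiff, not_or, iff_def] using mem_iInter.1 hy s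
  refine hb.nhds_hasBasis.tendsto_right_iff.2 fun s ⟨hsb, hfx⟩ => ?_
  filter_upwards [mem_nhdsWithin_of_mem_nhds ((hvo ⟨s, hsb⟩).mem_nhds ((hG ⟨s, hsb⟩ x hx).1 hfx)),
    self_mem_nhdsWithin] with y hyv hy
  exact (hG ⟨s, hsb⟩ y hy).2 hyv

theorem ContinuousOn.exists_isOpen_dense_volume_image_inter_le {X : Type*} [TopologicalSpace X]
    {f : X → ℝ} {G D : Set X} (hf : ContinuousOn f G) (hDG : D ⊆ G) (hDc : D.Countable)
    (hD : Dense D) {ε : ℝ≥0∞} (hε : ε ≠ 0) :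
    ∃ U, IsOpen U ∧ Dense U ∧ volume (f '' (G ∩ U)) ≤ ε := by
  have := hDc.to_subtype
  obtain ⟨r, hr0, hr⟩ := ENNReal.exists_pos_sum_of_countable hε D
  have hnhds (d : D) : ∃ u, IsOpen u ∧ (d : X) ∈ u ∧ u ∩ G ⊆ f ⁻¹' ball (f d) (r d / 2) :=
    mem_nhdsWithin.1 <| (hf d (hDG d.2)).preimage_mem_nhdsWithin <|
      ball_mem_nhds _ (by simpa using hr0 d)
  choose u hu hdu hfu using hnhds
  refine ⟨⋃ d, u d, isOpen_iUnion hu, hD.mono fun d hd => mem_iUnion.2 ⟨⟨d, hd⟩, hdu _⟩, ?_⟩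
  have himage : f '' (G ∩ ⋃ d, u d) ⊆ ⋃ d : D, ball (f d) (r d / 2) := by
    rintro _ ⟨y, ⟨hyG, hyU⟩, rfl⟩
    obtain ⟨d, hd⟩ := mem_iUnion.1 hyU
    exact mem_iUnion.2 ⟨d, hfu d ⟨hd, hyG⟩⟩
  calc volume (f '' (G ∩ ⋃ d, u d))
      ≤ ∑' d : D, volume (ball (f d) (r d / 2)) := (measure_mono himage).trans (measure_iUnion_le _)
    _ = ∑' d : D, (r d : ℝ≥0∞) := by simp [Real.volume_ball, mul_div_cancel₀]
    _ ≤ ε := hr.le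

theorem stmt_12 (f : ℝ → ℝ)
    (hf : ∀ U : Set ℝ, IsOpen U → ∃ V : Set ℝ, IsOpen V ∧ IsMeagre (symmDiff (f ⁻¹' U) V))
    (hsmall : ∀ A : Set ℝ, IsMeagre A → volume (f '' A) = 0) :
    volume (Set.range f) = 0 := by
  obtain ⟨G, hG, hfG⟩ := exists_mem_residual_continuousOn hf
  obtain ⟨D, hDG, hDc, hD⟩ := (dense_of_mem_residual hG).exists_countable_dense_subset
  refine le_antisymm (ENNReal.le_of_forall_pos_le_add fun ε hε _ => ?_) zero_le
  obtain ⟨U, hUo, hUd, hU⟩ :=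
    hfG.exists_isOpen_dense_volume_image_inter_le hDG hDc hD (ε := ε) (by simpa using hε.ne')
  have hW : IsMeagre (G ∩ U)ᶜ := by
    rw [IsMeagre, compl_compl]
    exact inter_mem hG (residual_of_dense_open hUo hUd)
  calc volume (range f) = volume (f '' (G ∩ U)ᶜ ∪ f '' (G ∩ U)) := by
        rw [← image_union, compl_union_self, image_univ]
    _ ≤ volume (f '' (G ∩ U)ᶜ) + volume (f '' (G ∩ U)) := measure_union_le _ _
    _ ≤ 0 + ε := by rw [hsmall _ hW]; exact add_le_add le_rfl hU
end

section
/- Let f : ℝ → ℝ be continuous, and suppose that for every meager set A ⊆ ℝ, the image f(A) has Lebesgue measure zero. Then f is constant. -/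
open MeasureTheory Set TopologicalSpace

/-!
If `f` is not constant, its range contains an interval `[a, b]`, which contains a closed set `M`
with empty interior and positive measure (remove from `[a, b]` a small open neighbourhood of the
rationals). On the interior of the closed set `f⁻¹(M)` the function `f` is locally constant, since
a connected image inside `M` is a point; so every value of `M` outside the countable set of values
that `f` takes on a whole open set is attained on the frontier of `f⁻¹(M)`, a closed nowhere dense
set. Its image therefore has positive measure.
-/

theorem IsPreconnected.subsingleton_of_interior_eq_empty {α : Type*} [LinearOrder α]
    [TopologicalSpace α] [OrderTopology α] [DenselyOrdered α] {s : Set α}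
    (hs : IsPreconnected s) (hint : interior s = ∅) : s.Subsingleton := by
  intro x hx y hy
  by_contra hxy
  obtain ⟨z, hz⟩ := nonempty_Ioo.2 (min_lt_max.2 hxy)
  have hsub : Ioo (min x y) (max x y) ⊆ s :=
    Ioo_subset_Icc_self.trans (hs.ordConnected.uIcc_subset hx hy)
  simpa [hint] using interior_maximal hsub isOpen_Ioo hz

def plateauValues {X Y : Type*} [TopologicalSpace X] (f : X → Y) : Set Y :=
  {y | (interior (f ⁻¹' {y})).Nonempty}

theorem countable_plateauValues {X Y : Type*} [TopologicalSpace X] [SeparableSpace X]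
    (f : X → Y) : (plateauValues f).Countable := by
  obtain ⟨C, hC, hCd⟩ := exists_countable_dense X
  refine (hC.image f).mono fun y hy => ?_
  obtain ⟨x, hxy, hxC⟩ := hCd.inter_open_nonempty _ isOpen_interior hy
  exact ⟨x, hxC, interior_subset (s := f ⁻¹' {y}) hxy⟩

theorem interior_preimage_subset_preimage_plateauValues {X α : Type*} [TopologicalSpace X]
    [LocallyConnectedSpace X] [LinearOrder α] [TopologicalSpace α] [OrderTopology α]
    [DenselyOrdered α] {f : X → α} (hf : Continuous f) {M : Set α} (hM : interior M = ∅) :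
    interior (f ⁻¹' M) ⊆ f ⁻¹' plateauValues f := by
  intro x hx
  obtain ⟨V, hVM, hVo, hxV, hVc⟩ :=
    locallyConnectedSpace_iff_subsets_isOpen_isConnected.1 ‹_› x _
      (isOpen_interior.mem_nhds hx)
  have hconst : (f '' V).Subsingleton :=
    (hVc.isPreconnected.image f hf.continuousOn).subsingleton_of_interior_eq_empty
      (eq_empty_of_subset_empty <| hM ▸ interior_mono
        (image_subset_iff.2 (hVM.trans interior_subset)))
  exact ⟨x, interior_maximal (fun z hz => hconst (mem_image_of_mem f hz)
    (mem_image_of_mem f hxV)) hVo hxV⟩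

theorem exists_isClosed_subset_interior_eq_empty_measure_pos {X : Type*} [TopologicalSpace X]
    [SeparableSpace X] [MeasurableSpace X] {μ : Measure X} [μ.OuterRegular] [NullSingletonClass μ]
    {s : Set X} (hs : IsClosed s) (hμs : 0 < μ s) :
    ∃ M ⊆ s, IsClosed M ∧ interior M = ∅ ∧ 0 < μ M := by
  obtain ⟨C, hC, hCd⟩ := exists_countable_dense X
  obtain ⟨U, hCU, hUo, hUμ⟩ := C.exists_isOpen_lt_of_lt (μ s) (by rwa [hC.measure_zero μ])
  refine ⟨s \ U, sdiff_subset, hs.sdiff hUo, ?_, ?_⟩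
  · have := interior_mono (sdiff_subset_compl s U)
    rwa [interior_compl, (hCd.mono hCU).closure_eq, compl_univ, subset_empty_iff] at this
  · exact (tsub_pos_of_lt hUμ).trans_le le_measure_sdiff

theorem stmt_13 (f : ℝ → ℝ) (hf : Continuous f)
    (hsmall : ∀ A : Set ℝ, IsMeagre A → volume (f '' A) = 0) :
    ∃ c : ℝ, ∀ x : ℝ, f x = c := by
  by_contra! hnc
  obtain ⟨a, b, hab, habf⟩ : ∃ a b, a < b ∧ Icc a b ⊆ range f := by
    obtain ⟨x, hx⟩ := hnc (f 0)
    exact ⟨_, _, min_lt_max.2 hx.symm,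
      (isPreconnected_range hf).ordConnected.uIcc_subset (mem_range_self _) (mem_range_self _)⟩
  obtain ⟨M, hMab, hMc, hMi, hMpos⟩ :=
    exists_isClosed_subset_interior_eq_empty_measure_pos (μ := volume)
      (isClosed_Icc (a := a) (b := b)) (by simpa using hab)
  have hpre : IsClosed (f ⁻¹' M) := hMc.preimage hf
  have hA : IsMeagre (frontier (f ⁻¹' M)) :=
    (isClosed_frontier.isNowhereDense_iff.2 (interior_frontier hpre)).isMeagre
  have hMA : M \ plateauValues f ⊆ f '' frontier (f ⁻¹' M) := by
    rintro y ⟨hyM, hyD⟩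
    obtain ⟨x, rfl⟩ := habf (hMab hyM)
    rw [hpre.frontier_eq]
    exact ⟨x, ⟨hyM, fun hx =>
      hyD (interior_preimage_subset_preimage_plateauValues hf hMi hx)⟩, rfl⟩
  refine hMpos.ne' ?_
  rw [← measure_sdiff_null ((countable_plateauValues f).measure_zero volume)]
  exact measure_mono_null hMA (hsmall _ hA)
end

section
/- Let μ be a Borel probability measure on ℝ concentrated on [0,1] (i.e., μ([0,1]) = 1), and let F : [0,1] → ℝ be defined by F(x) = μ([0, x]). Then the following are equivalent: (1) μ and Lebesgue measure restricted to [0,1] are mutually absolutely continuous (each is absolutely continuous with respect to the other); (2) F is a homeomorphism of [0,1] onto [0,1], and both F and its inverse F⁻¹ satisfy Luzin's property (N). -/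
open MeasureTheory Set

/-!
The cumulative distribution function `F` of `μ` is a homeomorphism of `[0, 1]` exactly when `μ`
has no atoms and charges every nondegenerate interval of `[0, 1]`, and in that case it transports
`μ` to Lebesgue measure on `[0, 1]`: `λ (F '' B) = μ B` for every Borel `B ⊆ [0, 1]`.
So the `μ`-null sets of `[0, 1]` are the preimages under `F` of the Lebesgue-null sets, and `μ` and
`λ` have the same null sets iff both `F` and `F⁻¹` preserve Lebesgue-null sets.
-/

theorem IsCompact.continuousOn_of_invOn {α β : Type*} [TopologicalSpace α] [TopologicalSpace β]
    [T2Space β] {f : α → β} {g : β → α} {s : Set α} {t : Set β} (hs : IsCompact s)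
    (hf : ContinuousOn f s) (hinv : InvOn g f s t) (hg : MapsTo g t s) : ContinuousOn g t := by
  refine continuousOn_iff_isClosed.2 fun c hc => ⟨f '' (c ∩ s), ?_, ?_⟩
  · exact ((hs.inter_left hc).image_of_continuousOn (hf.mono inter_subset_right)).isClosed
  · ext y
    constructor
    · rintro ⟨hyc, hyt⟩
      exact ⟨⟨g y, ⟨hyc, hg hyt⟩, hinv.2 hyt⟩, hyt⟩
    · rintro ⟨⟨x, ⟨hxc, hxs⟩, rfl⟩, hyt⟩
      exact ⟨by rwa [mem_preimage, hinv.1 hxs], hyt⟩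

theorem MeasureTheory.measure_preimage_image_of_injOn {α β : Type*} [MeasurableSpace α]
    {μ : Measure α} {f : α → β} {s B : Set α} (hf : InjOn f s) (hs : μ sᶜ = 0) (hB : B ⊆ s) :
    μ (f ⁻¹' (f '' B)) = μ B := by
  rw [← measure_inter_conull hs, hf.preimage_image_inter hB]

theorem StieltjesFunction.continuous_of_measure_singleton (f : StieltjesFunction ℝ)
    (h : ∀ x, f.measure {x} = 0) : Continuous f := by
  refine continuous_iff_continuousAt.2 fun x => f.mono.continuousAt_iff_leftLim_eq_rightLim.2 ?_
  have hx := h x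
  rw [f.measure_singleton, ENNReal.ofReal_eq_zero] at hx
  rw [f.rightLim_eq]
  linarith [f.mono.leftLim_le (le_refl x)]

namespace ProbabilityTheory

variable {μ : Measure ℝ} [IsProbabilityMeasure μ]

theorem continuous_cdf_of_measure_singleton (h : ∀ x, μ {x} = 0) : Continuous (cdf μ) :=
  (cdf μ).continuous_of_measure_singleton fun x => by rw [measure_cdf]; exact h x

theorem cdf_lt_cdf_of_measure_Ioc_ne_zero {x y : ℝ} (h : μ (Ioc x y) ≠ 0) : cdf μ x < cdf μ y := by
  rw [← measure_cdf (μ := μ), StieltjesFunction.measure_Ioc, Ne, ENNReal.ofReal_eq_zero] at h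
  linarith

theorem strictMonoOn_cdf
    (hac : ∀ A : Set ℝ, MeasurableSet A → A ⊆ Icc 0 1 → μ A = 0 → volume A = 0) :
    StrictMonoOn (cdf μ) (Icc 0 1) := by
  intro x hx y hy hxy
  refine cdf_lt_cdf_of_measure_Ioc_ne_zero fun h0 => ?_
  have hsub : Ioc x y ⊆ Icc 0 1 := Ioc_subset_Icc_self.trans (Icc_subset_Icc hx.1 hy.2)
  have hvol := hac _ measurableSet_Ioc hsub h0
  rw [Real.volume_Ioc, ENNReal.ofReal_eq_zero] at hvol
  linarith

section ConcentratedOnUnitInterval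

variable (hconc : μ (Icc 0 1) = 1)
include hconc

theorem cdf_eq_toReal_measure_Icc (x : ℝ) : cdf μ x = (μ (Icc 0 x)).toReal := by
  have hIci : μ (Ici 0)ᶜ = 0 :=
    measure_mono_null (compl_subset_compl.2 Icc_subset_Ici_self)
      ((prob_compl_eq_zero_iff measurableSet_Icc).2 hconc)
  rw [cdf_eq_real, measureReal_def, ← Iic_inter_Ici, measure_inter_conull hIci]

theorem cdf_zero_of_measure_singleton (h : μ {0} = 0) : cdf μ 0 = 0 := by
  rw [cdf_eq_toReal_measure_Icc hconc, Icc_self, h, ENNReal.toReal_zero]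

theorem cdf_one : cdf μ 1 = 1 := by
  rw [cdf_eq_toReal_measure_Icc hconc, hconc, ENNReal.toReal_one]

theorem measure_singleton_eq_zero
    (hac : ∀ A : Set ℝ, MeasurableSet A → A ⊆ Icc 0 1 → volume A = 0 → μ A = 0) (x : ℝ) :
    μ {x} = 0 := by
  by_cases hx : x ∈ Icc (0 : ℝ) 1
  · exact hac {x} (measurableSet_singleton x) (singleton_subset_iff.2 hx) Real.volume_singleton
  · exact measure_mono_null (singleton_subset_iff.2 hx)
      ((prob_compl_eq_zero_iff measurableSet_Icc).2 hconc)

theorem bijOn_cdf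
    (hac : ∀ A : Set ℝ, MeasurableSet A → A ⊆ Icc 0 1 → (μ A = 0 ↔ volume A = 0)) :
    BijOn (cdf μ) (Icc 0 1) (Icc 0 1) := by
  have hatom := measure_singleton_eq_zero hconc fun A hAm hA => (hac A hAm hA).2
  have h0 := cdf_zero_of_measure_singleton hconc (hatom 0)
  have h1 := cdf_one hconc
  have hcont := continuous_cdf_of_measure_singleton hatom
  refine ⟨fun x hx => ?_, (strictMonoOn_cdf fun A hAm hA => (hac A hAm hA).1).injOn, ?_⟩
  · rw [← h0, ← h1]
    exact ⟨monotone_cdf μ hx.1, monotone_cdf μ hx.2⟩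
  · simpa only [SurjOn, h0, h1] using intermediate_value_Icc zero_le_one hcont.continuousOn

end ConcentratedOnUnitInterval

section Homeomorph

variable (hconc : μ (Icc 0 1) = 1) (hbij : BijOn (cdf μ) (Icc 0 1) (Icc 0 1))
include hconc hbij

theorem map_cdf_eq_volume_restrict : μ.map (cdf μ) = volume.restrict (Icc 0 1) := by
  have hsm : StrictMonoOn (cdf μ) (Icc 0 1) :=
    (monotone_cdf μ).monotoneOn _ |>.strictMonoOn_of_injOn hbij.injOn
  have hconc' : μ (Icc 0 1)ᶜ = 0 := (prob_compl_eq_zero_iff measurableSet_Icc).2 hconc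
  have hI : ∀ b : ℝ, Iic b ∩ Icc 0 1 = Icc 0 (min b 1) := fun b => by
    ext x; simp only [mem_inter_iff, mem_Iic, mem_Icc, le_min_iff]; tauto
  refine Measure.ext_of_Iic _ _ fun b => ?_
  rw [Measure.map_apply (monotone_cdf μ).measurable measurableSet_Iic,
    Measure.restrict_apply measurableSet_Iic, hI, Real.volume_Icc, sub_zero]
  rcases lt_or_ge b 0 with hb0 | hb0
  · have hpre : cdf μ ⁻¹' Iic b = ∅ :=
      eq_empty_of_forall_notMem fun x hx => hb0.not_ge ((cdf_nonneg μ x).trans hx)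
    rw [hpre, measure_empty, ENNReal.ofReal_of_nonpos ((min_le_left b 1).trans hb0.le)]
  rcases lt_or_ge b 1 with hb1 | hb1
  · obtain ⟨c, hc, hcb⟩ := hbij.surjOn ⟨hb0, hb1.le⟩
    have hpre : cdf μ ⁻¹' Iic b ∩ Icc 0 1 = Iic c ∩ Icc 0 1 := by
      ext x
      simp only [mem_inter_iff, mem_preimage, mem_Iic, ← hcb]
      exact ⟨fun ⟨hx, hxI⟩ => ⟨(hsm.le_iff_le hxI hc).1 hx, hxI⟩,
        fun ⟨hx, hxI⟩ => ⟨monotone_cdf μ hx, hxI⟩⟩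
    rw [← measure_inter_conull hconc', hpre, measure_inter_conull hconc', ← ofReal_cdf, hcb,
      min_eq_left hb1.le]
  · have hpre : cdf μ ⁻¹' Iic b = univ :=
      eq_univ_of_forall fun x => (cdf_le_one μ x).trans hb1
    rw [hpre, measure_univ, min_eq_right hb1, ENNReal.ofReal_one]

theorem volume_image_cdf (hcont : ContinuousOn (cdf μ) (Icc 0 1)) {B : Set ℝ}
    (hBm : MeasurableSet B) (hB : B ⊆ Icc 0 1) : volume (cdf μ '' B) = μ B := by
  have hFB : MeasurableSet (cdf μ '' B) :=
    hBm.image_of_continuousOn_injOn (hcont.mono hB) (hbij.injOn.mono hB)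
  calc volume (cdf μ '' B) = volume.restrict (Icc 0 1) (cdf μ '' B) := by
        rw [Measure.restrict_apply hFB, inter_eq_left.2 (hbij.mapsTo.mono_left hB).image_subset]
    _ = μ (cdf μ ⁻¹' (cdf μ '' B)) := by
        rw [← map_cdf_eq_volume_restrict hconc hbij,
          Measure.map_apply (monotone_cdf μ).measurable hFB]
    _ = μ B := measure_preimage_image_of_injOn hbij.injOn
        ((prob_compl_eq_zero_iff measurableSet_Icc).2 hconc) hB

variable (hcont : ContinuousOn (cdf μ) (Icc 0 1))
include hcont

theorem volume_image_cdf_eq_zero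
    (hac : ∀ A : Set ℝ, MeasurableSet A → A ⊆ Icc 0 1 → volume A = 0 → μ A = 0)
    {A : Set ℝ} (hA : A ⊆ Icc 0 1) (h0 : volume A = 0) : volume (cdf μ '' A) = 0 := by
  set B := toMeasurable volume A ∩ Icc 0 1
  have hBm : MeasurableSet B := (measurableSet_toMeasurable _ _).inter measurableSet_Icc
  have hB0 : μ B = 0 := hac B hBm inter_subset_right <|
    measure_mono_null inter_subset_left (by rwa [measure_toMeasurable])
  have hAB : A ⊆ B := subset_inter (subset_toMeasurable _ _) hA
  refine measure_mono_null (image_mono hAB) ?_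
  rwa [volume_image_cdf hconc hbij hcont hBm inter_subset_right]

theorem volume_image_eq_zero_of_invOn {G : ℝ → ℝ} (hinv : InvOn G (cdf μ) (Icc 0 1) (Icc 0 1))
    (hG : MapsTo G (Icc 0 1) (Icc 0 1))
    (hac : ∀ A : Set ℝ, MeasurableSet A → A ⊆ Icc 0 1 → μ A = 0 → volume A = 0)
    {A : Set ℝ} (hA : A ⊆ Icc 0 1) (h0 : volume A = 0) : volume (G '' A) = 0 := by
  set C := Icc 0 1 ∩ cdf μ ⁻¹' toMeasurable volume A
  have hCm : MeasurableSet C :=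
    measurableSet_Icc.inter ((monotone_cdf μ).measurable (measurableSet_toMeasurable _ _))
  have hC0 : μ C = 0 := by
    rw [← volume_image_cdf hconc hbij hcont hCm inter_subset_left]
    refine measure_mono_null ((image_mono inter_subset_right).trans (image_preimage_subset _ _)) ?_
    rwa [measure_toMeasurable]
  refine measure_mono_null ?_ (hac C hCm inter_subset_left hC0)
  rintro _ ⟨y, hy, rfl⟩
  exact ⟨hG (hA hy), by rw [mem_preimage, hinv.2 (hA hy)]; exact subset_toMeasurable _ _ hy⟩

end Homeomorph

end ProbabilityTheory

open ProbabilityTheory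

theorem stmt_15 (μ : Measure ℝ) [IsProbabilityMeasure μ]
    (hconc : μ (Set.Icc (0:ℝ) 1) = 1)
    (F : ℝ → ℝ) (hF : ∀ x : ℝ, F x = (μ (Set.Icc 0 x)).toReal) :
    ((∀ A : Set ℝ, MeasurableSet A → A ⊆ Set.Icc (0:ℝ) 1 → (μ A = 0 ↔ volume A = 0))
      ↔
     (∃ G : ℝ → ℝ,
        Set.BijOn F (Set.Icc (0:ℝ) 1) (Set.Icc (0:ℝ) 1) ∧
        Set.InvOn G F (Set.Icc (0:ℝ) 1) (Set.Icc (0:ℝ) 1) ∧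
        ContinuousOn F (Set.Icc (0:ℝ) 1) ∧
        ContinuousOn G (Set.Icc (0:ℝ) 1) ∧
        (∀ A : Set ℝ, A ⊆ Set.Icc (0:ℝ) 1 → volume A = 0 → volume (F '' A) = 0) ∧
        (∀ A : Set ℝ, A ⊆ Set.Icc (0:ℝ) 1 → volume A = 0 → volume (G '' A) = 0))) := by
  obtain rfl : F = cdf μ := funext fun x => (hF x).trans (cdf_eq_toReal_measure_Icc hconc x).symm
  constructor
  · intro hac
    have hbij := bijOn_cdf hconc hac
    have hcont := (continuous_cdf_of_measure_singleton (measure_singleton_eq_zero hconc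
      fun A hAm hA => (hac A hAm hA).2)).continuousOn (s := Icc 0 1)
    have hinv := hbij.invOn_invFunOn
    have hG := hbij.surjOn.mapsTo_invFunOn
    exact ⟨_, hbij, hinv, hcont, isCompact_Icc.continuousOn_of_invOn hcont hinv hG,
      fun A => volume_image_cdf_eq_zero hconc hbij hcont fun B hBm hB => (hac B hBm hB).2,
      fun A => volume_image_eq_zero_of_invOn hconc hbij hcont hinv hG
        fun B hBm hB => (hac B hBm hB).1⟩
  · rintro ⟨G, hbij, hinv, hcont, -, hNF, hNG⟩ A hAm hA
    rw [← volume_image_cdf hconc hbij hcont hAm hA]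
    refine ⟨fun h0 => ?_, hNF A hA⟩
    simpa only [hinv.1.image_image' hA] using
      hNG _ (hbij.mapsTo.mono_left hA).image_subset h0
end

section
/- Let f : [0,1] → ℝ be continuous and of bounded variation on [0,1], and let (Uₙ) be a decreasing sequence of open subsets of [0,1] (open in the subspace topology, with Uₙ₊₁ ⊆ Uₙ for all n). Then λ(f(⋂ₙ Uₙ)) = limₙ λ(f(Uₙ)), where λ denotes Lebesgue outer measure. -/
/-!
The sets `f '' Uₙ` are measurable (images of σ-compact sets under a continuous map) and of finite
measure, and they decrease to `⋂ₙ f '' Uₙ ⊇ f '' ⋂ₙ Uₙ`; by continuity of measure from above it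
suffices that the difference is null. A value `y` in the difference has infinitely many preimages
in `[0, 1]`, since a nested sequence of nonempty finite sets has nonempty intersection. The set of
such values is null by Banach's indicatrix argument: if `Nₘ y` counts the cells of the partition of
`[0, 1]` into `m` equal pieces whose image contains `y`, then `∫ Nₘ ≤ Var f` because the image of
a cell has measure at most the variation of `f` on it, while `Nₘ y → ∞` whenever `y` has infinitely
many preimages; Fatou's lemma then forces this set to be null.
-/

open MeasureTheory Set Filter
open scoped ENNReal

theorem measurableSet_image_inter_of_isOpen {α β : Type*} [PseudoMetricSpace α]
    [TopologicalSpace β] [T2Space β] [MeasurableSpace β] [OpensMeasurableSpace β]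
    {f : α → β} {K V : Set α} (hK : IsCompact K) (hf : ContinuousOn f K) (hV : IsOpen V) :
    MeasurableSet (f '' (V ∩ K)) := by
  obtain ⟨F, hF, -, rfl, -⟩ := hV.exists_iUnion_isClosed
  rw [iUnion_inter, image_iUnion]
  exact .iUnion fun n =>
    ((hK.inter_left (hF n)).image_of_continuousOn
      (hf.mono inter_subset_right)).isClosed.measurableSet

theorem volume_image_le_eVariationOn (f : ℝ → ℝ) (s : Set ℝ) :
    volume (f '' s) ≤ eVariationOn f s := by
  refine (Real.volume_le_diam _).trans (Metric.ediam_le ?_)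
  rintro _ ⟨x, hx, rfl⟩ _ ⟨x', hx', rfl⟩
  exact eVariationOn.edist_le f hx hx'

theorem eVariationOn.sum_Icc_succ {α E : Type*} [LinearOrder α] [PseudoEMetricSpace E]
    (f : α → E) {u : ℕ → α} (hu : Monotone u) (n : ℕ) :
    ∑ j ∈ Finset.range n, eVariationOn f (Icc (u j) (u (j + 1))) =
      eVariationOn f (Icc (u 0) (u n)) := by
  induction n with
  | zero => simp [eVariationOn.subsingleton]
  | succ n ih =>
    rw [Finset.sum_range_succ, ih]
    simpa using eVariationOn.Icc_add_Icc f (hu n.zero_le) (hu n.le_succ) (mem_univ (u n))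

theorem exists_lt_and_mem_Icc_succ {α : Type*} [LinearOrder α] (u : ℕ → α) {m : ℕ} (hm : m ≠ 0)
    {x : α} (hx : x ∈ Icc (u 0) (u m)) : ∃ j < m, x ∈ Icc (u j) (u (j + 1)) := by
  classical
  have hex : ∃ j, x ≤ u (j + 1) := ⟨m - 1, by rw [Nat.sub_add_cancel (by omega)]; exact hx.2⟩
  refine ⟨Nat.find hex, ?_, ?_, Nat.find_spec hex⟩
  · have := Nat.find_min' hex (m := m - 1) (by rw [Nat.sub_add_cancel (by omega)]; exact hx.2)
    omega
  · rcases h : Nat.find hex with _ | i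
    · exact hx.1
    · exact (not_le.1 (Nat.find_min hex (h ▸ i.lt_succ_self))).le

noncomputable def gridPoint (a b : ℝ) (m j : ℕ) : ℝ := a + j * ((b - a) / m)

noncomputable def gridIndicatrix (f : ℝ → ℝ) (a b : ℝ) (m : ℕ) (y : ℝ) : ℝ≥0∞ :=
  ∑ j ∈ Finset.range m, (f '' Icc (gridPoint a b m j) (gridPoint a b m (j + 1))).indicator 1 y

section Grid

variable {a b : ℝ}

theorem monotone_gridPoint (hab : a ≤ b) (m : ℕ) : Monotone (gridPoint a b m) := fun i j hij => by
  unfold gridPoint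
  gcongr

@[simp] theorem gridPoint_zero (a b : ℝ) (m : ℕ) : gridPoint a b m 0 = a := by
  simp [gridPoint]

theorem gridPoint_self (a b : ℝ) {m : ℕ} (hm : m ≠ 0) : gridPoint a b m m = b := by
  unfold gridPoint
  field_simp
  ring

theorem gridPoint_succ_sub (a b : ℝ) (m j : ℕ) :
    gridPoint a b m (j + 1) - gridPoint a b m j = (b - a) / m := by
  unfold gridPoint
  push_cast
  ring

theorem gridPoint_mem_Icc (hab : a ≤ b) {m j : ℕ} (hj : j ≤ m) : gridPoint a b m j ∈ Icc a b := by
  rcases eq_or_ne m 0 with rfl | hm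
  · obtain rfl : j = 0 := by omega
    simpa using hab
  · have h := monotone_gridPoint hab m
    exact ⟨(gridPoint_zero a b m).symm.trans_le (h j.zero_le),
      (h hj).trans_eq (gridPoint_self a b hm)⟩

theorem Icc_gridPoint_subset (hab : a ≤ b) {m j : ℕ} (hj : j < m) :
    Icc (gridPoint a b m j) (gridPoint a b m (j + 1)) ⊆ Icc a b :=
  Icc_subset_Icc (gridPoint_mem_Icc hab hj.le).1 (gridPoint_mem_Icc hab hj).2

end Grid

section Indicatrix

variable {f : ℝ → ℝ} {a b : ℝ}

theorem measurableSet_image_Icc_gridPoint (hf : ContinuousOn f (Icc a b)) (hab : a ≤ b)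
    {m j : ℕ} (hj : j < m) :
    MeasurableSet (f '' Icc (gridPoint a b m j) (gridPoint a b m (j + 1))) :=
  (isCompact_Icc.image_of_continuousOn
    (hf.mono (Icc_gridPoint_subset hab hj))).isClosed.measurableSet

theorem measurable_gridIndicatrix (hf : ContinuousOn f (Icc a b)) (hab : a ≤ b) (m : ℕ) :
    Measurable (gridIndicatrix f a b m) :=
  Finset.measurable_sum _ fun _ hj =>
    measurable_const.indicator (measurableSet_image_Icc_gridPoint hf hab (Finset.mem_range.1 hj))

theorem lintegral_gridIndicatrix_le (hf : ContinuousOn f (Icc a b)) (hab : a ≤ b) (m : ℕ) :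
    ∫⁻ y, gridIndicatrix f a b m y ≤ eVariationOn f (Icc a b) := by
  have hmeas := fun j (hj : j ∈ Finset.range m) =>
    measurableSet_image_Icc_gridPoint hf hab (Finset.mem_range.1 hj)
  unfold gridIndicatrix
  calc ∫⁻ y, ∑ j ∈ Finset.range m,
        (f '' Icc (gridPoint a b m j) (gridPoint a b m (j + 1))).indicator 1 y
      = ∑ j ∈ Finset.range m, ∫⁻ y,
          (f '' Icc (gridPoint a b m j) (gridPoint a b m (j + 1))).indicator 1 y :=
        lintegral_finsetSum _ fun j hj => measurable_const.indicator (hmeas j hj)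
    _ = ∑ j ∈ Finset.range m,
          volume (f '' Icc (gridPoint a b m j) (gridPoint a b m (j + 1))) :=
        Finset.sum_congr rfl fun j hj => lintegral_indicator_one (hmeas j hj)
    _ ≤ ∑ j ∈ Finset.range m,
          eVariationOn f (Icc (gridPoint a b m j) (gridPoint a b m (j + 1))) :=
        Finset.sum_le_sum fun j _ => volume_image_le_eVariationOn f _
    _ = eVariationOn f (Icc (gridPoint a b m 0) (gridPoint a b m m)) :=
        eVariationOn.sum_Icc_succ f (monotone_gridPoint hab m) m
    _ ≤ eVariationOn f (Icc a b) :=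
        eVariationOn.mono f (Icc_subset_Icc (gridPoint_mem_Icc hab m.zero_le).1
          (gridPoint_mem_Icc hab le_rfl).2)

theorem card_le_gridIndicatrix {m : ℕ} (hm : m ≠ 0) {y : ℝ} {F : Finset ℝ}
    (hF : ↑F ⊆ f ⁻¹' {y} ∩ Icc a b)
    (hsep : (F : Set ℝ).Pairwise fun x x' => (b - a) / m < |x - x'|) :
    (F.card : ℝ≥0∞) ≤ gridIndicatrix f a b m y := by
  have hcell : ∀ x ∈ F, ∃ j < m, x ∈ Icc (gridPoint a b m j) (gridPoint a b m (j + 1)) :=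
    fun x hx => exists_lt_and_mem_Icc_succ _ hm <| by
      rw [gridPoint_zero, gridPoint_self a b hm]
      exact (hF hx).2
  choose! c hcm hcx using hcell
  have hinj : InjOn c F := by
    intro x hx x' hx' hc
    by_contra hne
    have hwidth := gridPoint_succ_sub a b m (c x')
    have hx_cell := hcx x hx
    rw [hc] at hx_cell
    have hx'_cell := hcx x' hx'
    have hfar : (b - a) / m < |x - x'| := hsep hx hx' hne
    rcases lt_abs.1 hfar with h | h <;>
      linarith [hx_cell.1, hx_cell.2, hx'_cell.1, hx'_cell.2]
  calc (F.card : ℝ≥0∞)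
      = ∑ j ∈ F.image c,
          (f '' Icc (gridPoint a b m j) (gridPoint a b m (j + 1))).indicator 1 y := by
        rw [← Finset.card_image_of_injOn hinj, Finset.card_eq_sum_ones, Nat.cast_sum]
        refine Finset.sum_congr rfl fun j hj => ?_
        obtain ⟨x, hx, rfl⟩ := Finset.mem_image.1 hj
        rw [indicator_of_mem (show y ∈ f '' _ from ⟨x, hcx x hx, (hF hx).1⟩)]
        simp
    _ ≤ gridIndicatrix f a b m y :=
        Finset.sum_le_sum_of_subset fun j hj => by
          obtain ⟨x, hx, rfl⟩ := Finset.mem_image.1 hj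
          exact Finset.mem_range.2 (hcm x hx)

theorem liminf_gridIndicatrix_eq_top {y : ℝ} (hy : (f ⁻¹' {y} ∩ Icc a b).Infinite) :
    liminf (fun m => gridIndicatrix f a b m y) atTop = ∞ := by
  refine top_unique ?_
  rw [← ENNReal.iSup_natCast]
  refine iSup_le fun k => ?_
  obtain ⟨F, hF, rfl⟩ := hy.exists_subset_card_eq k
  have hsep : ∀ x ∈ F, ∀ x' ∈ F, ∀ᶠ m : ℕ in atTop, x ≠ x' → (b - a) / m < |x - x'| := by
    intro x _ x' _
    by_cases hxx' : x = x'
    · simp [hxx']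
    · exact ((tendsto_const_div_atTop_nhds_zero_nat (b - a)).eventually
        (gt_mem_nhds (abs_pos.2 (sub_ne_zero.2 hxx')))).mono fun _ h _ => h
  refine le_liminf_of_le (by isBoundedDefault) ?_
  filter_upwards [(eventually_all_finset F).2 fun x hx => (eventually_all_finset F).2 (hsep x hx),
    eventually_ne_atTop 0] with m hm hm0
  exact card_le_gridIndicatrix hm0 hF fun x hx x' hx' => hm x hx x' hx'

theorem volume_setOf_infinite_preimage_inter_Icc_eq_zero (hf : ContinuousOn f (Icc a b))
    (hbv : BoundedVariationOn f (Icc a b)) :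
    volume {y | (f ⁻¹' {y} ∩ Icc a b).Infinite} = 0 := by
  rcases lt_or_ge b a with hba | hab
  · simp [Icc_eq_empty_of_lt hba]
  have hmeas := Measurable.liminf (measurable_gridIndicatrix hf hab)
  have hint : ∫⁻ y, liminf (fun m => gridIndicatrix f a b m y) atTop ≠ ∞ :=
    ((lintegral_liminf_le (measurable_gridIndicatrix hf hab)).trans
      (liminf_le_of_frequently_le' (.of_forall (lintegral_gridIndicatrix_le hf hab)))).trans_lt
      hbv.lt_top |>.ne
  exact measure_mono_null (fun y hy => by simp [liminf_gridIndicatrix_eq_top hy])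
    (ae_iff.1 (ae_lt_top hmeas hint))

end Indicatrix

theorem iInter_image_subset_image_iInter_union {α β : Type*} [TopologicalSpace α] [T1Space α]
    (f : α → β) {s : Set α} {U : ℕ → Set α} (hU : Antitone U) (hUs : ∀ n, U n ⊆ s) :
    ⋂ n, f '' U n ⊆ (f '' ⋂ n, U n) ∪ {y | (f ⁻¹' {y} ∩ s).Infinite} := by
  intro y hy
  by_cases hfin : (f ⁻¹' {y} ∩ s).Infinite
  · exact Or.inr hfin
  left
  have hfin_n : ∀ n, (f ⁻¹' {y} ∩ U n).Finite := fun n =>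
    (not_infinite.1 hfin).subset (inter_subset_inter_right _ (hUs n))
  have hne : ∀ n, (f ⁻¹' {y} ∩ U n).Nonempty := fun n => by
    obtain ⟨x, hxU, hxy⟩ := mem_iInter.1 hy n
    exact ⟨x, hxy, hxU⟩
  -- Finite sets are compact and closed, so Cantor's intersection theorem applies.
  obtain ⟨x, hx⟩ := IsCompact.nonempty_iInter_of_sequence_nonempty_isCompact_isClosed _
    (fun n => inter_subset_inter_right _ (hU n.le_succ)) hne (hfin_n 0).isCompact
    (fun n => (hfin_n n).isClosed)
  exact ⟨x, mem_iInter.2 fun n => (mem_iInter.1 hx n).2, (mem_iInter.1 hx 0).1⟩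

theorem stmt_17 (f : ℝ → ℝ)
    (hf : ContinuousOn f (Set.Icc (0:ℝ) 1))
    (hbv : BoundedVariationOn f (Set.Icc (0:ℝ) 1))
    (U : ℕ → Set ℝ)
    (hUopen : ∀ n, ∃ V : Set ℝ, IsOpen V ∧ U n = V ∩ Set.Icc (0:ℝ) 1)
    (hUmono : ∀ n, U (n + 1) ⊆ U n) :
    Filter.Tendsto (fun n => volume (f '' U n)) Filter.atTop
      (nhds (volume (f '' ⋂ n, U n))) := by
  choose V hV hUV using hUopen
  have hUsub : ∀ n, U n ⊆ Icc 0 1 := fun n => hUV n ▸ inter_subset_right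
  have hU : Antitone U := antitone_nat_of_succ_le hUmono
  have hmeas : ∀ n, MeasurableSet (f '' U n) := fun n =>
    hUV n ▸ measurableSet_image_inter_of_isOpen isCompact_Icc hf (hV n)
  have hfin : volume (f '' U 0) ≠ ∞ :=
    ((measure_mono (image_mono (hUsub 0))).trans
      (volume_image_le_eVariationOn f _)).trans_lt hbv.lt_top |>.ne
  have hlim : volume (⋂ n, f '' U n) = volume (f '' ⋂ n, U n) := by
    refine le_antisymm ?_ (measure_mono (image_iInter_subset U f))
    calc volume (⋂ n, f '' U n)
        ≤ volume ((f '' ⋂ n, U n) ∪ {y | (f ⁻¹' {y} ∩ Icc 0 1).Infinite}) :=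
          measure_mono (iInter_image_subset_image_iInter_union f hU hUsub)
      _ ≤ volume (f '' ⋂ n, U n) + volume {y | (f ⁻¹' {y} ∩ Icc 0 1).Infinite} :=
          measure_union_le _ _
      _ = volume (f '' ⋂ n, U n) := by
          rw [volume_setOf_infinite_preimage_inter_Icc_eq_zero hf hbv, add_zero]
  rw [← hlim]
  exact tendsto_measure_iInter_atTop (fun n => (hmeas n).nullMeasurableSet)
    (fun _ _ h => image_mono (hU h)) ⟨0, hfin⟩
end
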